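/- arXiv:1209.0693 — 6 statements merged into one kernel-verified Lean document; each statement's English description precedes it below -/
import Mathlib

section
/- For integers m, n with 2 ≤ m ≤ n−1, the number of permutations of [n] whose peak set is exactly {m} equals (C(n−1, m−1) − 1)·2^{n−2}, where C(a,b) denotes the binomial coefficient. -/
/-- The value `a_i` (1-indexed) of the permutation word `a_1 … a_n` given by `π`. -/
def pval (n : ℕ) (π : Equiv.Perm (Fin n)) (i : ℕ) : ℕ :=
  if h : i - 1 < n then ((π ⟨i - 1, h⟩ : Fin n) : ℕ) + 1 else 0

/-- The peak set of a permutation of `[n]`: indices `i` with `2 ≤ i ≤ n-1` and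
`a_{i-1} < a_i > a_{i+1}`. -/
def peakSet (n : ℕ) (π : Equiv.Perm (Fin n)) : Finset ℕ :=
  (Finset.range n).filter fun i =>
    2 ≤ i ∧ i + 1 ≤ n ∧ pval n π (i - 1) < pval n π i ∧ pval n π (i + 1) < pval n π i

open Finset Equiv

lemma mem_peakSet_iff {n : ℕ} {π : Equiv.Perm (Fin n)} {i : ℕ} :
    i ∈ peakSet n π ↔ 2 ≤ i ∧ i + 1 ≤ n ∧
      pval n π (i - 1) < pval n π i ∧ pval n π (i + 1) < pval n π i := by
  simp only [peakSet, mem_filter, mem_range]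
  constructor
  · rintro ⟨-, h⟩; exact h
  · rintro ⟨h1, h2, h3⟩; exact ⟨by omega, h1, h2, h3⟩

lemma pval_eq {n : ℕ} (π : Equiv.Perm (Fin n)) {i : ℕ} (h : i - 1 < n) :
    pval n π i = (π ⟨i - 1, h⟩ : ℕ) + 1 := by
  simp [pval, h]

lemma pval_le {n : ℕ} (π : Equiv.Perm (Fin n)) (i : ℕ) : pval n π i ≤ n := by
  unfold pval; split
  · next h => exact (π ⟨i-1, h⟩).isLt
  · omega

/-- the allowed-peak-set counting function -/
def G (A : ℕ → Prop) [DecidablePred A] (n : ℕ) : ℕ :=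
  (Finset.univ.filter fun π : Equiv.Perm (Fin n) => ∀ i ∈ peakSet n π, A i).card

lemma G_congr {A B : ℕ → Prop} [DecidablePred A] [DecidablePred B] {n : ℕ}
    (h : ∀ i, 2 ≤ i → i + 1 ≤ n → (A i ↔ B i)) : G A n = G B n := by
  unfold G
  congr 1
  apply Finset.filter_congr
  intro π _
  constructor <;> intro hall i hi <;>
    have := mem_peakSet_iff.mp hi
  · exact (h i this.1 this.2.1).mp (hall i hi)
  · exact (h i this.1 this.2.1).mpr (hall i hi)

variable {N : ℕ}

def ins (q : Fin (N+1)) (σ : Equiv.Perm (Fin N)) : Equiv.Perm (Fin (N+1)) :=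
  (finSuccEquiv' q).trans ((σ.optionCongr).trans (finSuccEquiv' (Fin.last N)).symm)

lemma ins_apply_self (q : Fin (N+1)) (σ : Equiv.Perm (Fin N)) :
    ins q σ q = Fin.last N := by
  simp [ins, finSuccEquiv'_at, finSuccEquiv'_symm_none]

lemma ins_apply_succAbove (q : Fin (N+1)) (σ : Equiv.Perm (Fin N)) (j : Fin N) :
    ins q σ (q.succAbove j) = (σ j).castSucc := by
  simp [ins, finSuccEquiv'_succAbove, finSuccEquiv'_symm_some]

lemma pval_ins_lt {q : Fin (N+1)} {σ : Equiv.Perm (Fin N)} {i : ℕ}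
    (h1 : 1 ≤ i) (h2 : i ≤ (q : ℕ)) :
    pval (N+1) (ins q σ) i = pval N σ i := by
  have hq : (q : ℕ) ≤ N := Nat.lt_succ_iff.mp q.isLt
  have hiN : i - 1 < N := by omega
  have hiN1 : i - 1 < N + 1 := by omega
  rw [pval_eq _ hiN1, pval_eq _ hiN]
  have hcast : (⟨i - 1, hiN1⟩ : Fin (N+1)) = Fin.castSucc ⟨i - 1, hiN⟩ := rfl
  have hlt : Fin.castSucc (⟨i - 1, hiN⟩ : Fin N) < q := by
    rw [Fin.lt_iff_val_lt_val]; simp; omega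
  rw [hcast, ← Fin.succAbove_of_castSucc_lt _ _ hlt, ins_apply_succAbove]
  simp

lemma pval_ins_self {q : Fin (N+1)} {σ : Equiv.Perm (Fin N)} :
    pval (N+1) (ins q σ) ((q : ℕ) + 1) = N + 1 := by
  have h : (q : ℕ) + 1 - 1 < N + 1 := by omega
  rw [pval_eq _ h]
  have : (⟨(q : ℕ) + 1 - 1, h⟩ : Fin (N+1)) = q := by
    apply Fin.ext; simp
  rw [this, ins_apply_self]
  simp [Fin.last]

lemma pval_ins_gt {q : Fin (N+1)} {σ : Equiv.Perm (Fin N)} {i : ℕ}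
    (h1 : (q : ℕ) + 2 ≤ i) (h2 : i ≤ N + 1) :
    pval (N+1) (ins q σ) i = pval N σ (i - 1) := by
  have hiN : i - 1 - 1 < N := by omega
  have hiN1 : i - 1 < N + 1 := by omega
  rw [pval_eq _ hiN1, pval_eq _ hiN]
  have hsucc : (⟨i - 1, hiN1⟩ : Fin (N+1)) = Fin.succ ⟨i - 1 - 1, hiN⟩ := by
    apply Fin.ext; simp; omega
  have hle : q ≤ Fin.castSucc (⟨i - 1 - 1, hiN⟩ : Fin N) := by
    rw [Fin.le_iff_val_le_val]; simp; omega
  rw [hsucc, ← Fin.succAbove_of_le_castSucc _ _ hle, ins_apply_succAbove]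
  simp

lemma mem_peakSet_ins {q : Fin (N+1)} {σ : Equiv.Perm (Fin N)} {i : ℕ} :
    i ∈ peakSet (N+1) (ins q σ) ↔
      (i < (q:ℕ) ∧ i ∈ peakSet N σ) ∨
      (i = (q:ℕ)+1 ∧ 2 ≤ i ∧ i + 1 ≤ N + 1) ∨
      ((q:ℕ)+3 ≤ i ∧ i - 1 ∈ peakSet N σ) := by
  have hq : (q:ℕ) ≤ N := Nat.lt_succ_iff.mp q.isLt
  simp only [mem_peakSet_iff]
  by_cases hb : 2 ≤ i ∧ i + 1 ≤ N + 1
  case neg =>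
    constructor
    · rintro ⟨h1, h2, -⟩; exact absurd ⟨h1, h2⟩ hb
    · rintro (⟨hlt, h1, h2, -⟩ | ⟨rfl, h1, h2⟩ | ⟨hge, h1, h2, -⟩)
      · exact absurd ⟨h1, by omega⟩ hb
      · exact absurd ⟨h1, h2⟩ hb
      · exact absurd ⟨by omega, by omega⟩ hb
  obtain ⟨hb1, hb2⟩ := hb
  rcases lt_trichotomy i (q:ℕ) with hlt | heq | hgt
  · rw [pval_ins_lt (i := i-1) (by omega) (by omega),
        pval_ins_lt (i := i) (by omega) (by omega),
        pval_ins_lt (i := i+1) (by omega) (by omega)]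
    constructor
    · rintro ⟨-, -, h3, h4⟩; exact Or.inl ⟨hlt, hb1, by omega, h3, h4⟩
    · rintro (⟨-, -, -, h3, h4⟩ | ⟨h, -⟩ | ⟨h, -⟩)
      · exact ⟨hb1, hb2, h3, h4⟩
      · omega
      · omega
  · have h1 : pval (N+1) (ins q σ) (i+1) = N + 1 := by rw [heq]; exact pval_ins_self
    have h2 : pval (N+1) (ins q σ) i ≤ N + 1 := pval_le _ _
    constructor
    · rintro ⟨-, -, -, h4⟩; omega
    · rintro (⟨h, -⟩ | ⟨h, -⟩ | ⟨h, -⟩) <;> omega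
  rcases Nat.lt_or_ge i ((q:ℕ)+2) with hi2 | hi2
  · -- i = q+1
    have heq : i = (q:ℕ)+1 := by omega
    subst heq
    have h1 : pval (N+1) (ins q σ) ((q:ℕ)+1) = N + 1 := pval_ins_self
    have h2 : pval (N+1) (ins q σ) ((q:ℕ)+1-1) < N + 1 := by
      have hql : 1 ≤ (q:ℕ) := by omega
      have : (q:ℕ)+1-1 = (q:ℕ) := by omega
      rw [this, pval_ins_lt (i := (q:ℕ)) (by omega) (by omega)]
      have := pval_le σ (q:ℕ); omega
    have h3 : pval (N+1) (ins q σ) ((q:ℕ)+1+1) < N + 1 := by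
      rw [pval_ins_gt (i := (q:ℕ)+2) (by omega) (by omega)]
      have := pval_le σ ((q:ℕ)+2-1); omega
    constructor
    · intro _; exact Or.inr (Or.inl ⟨rfl, hb1, hb2⟩)
    · intro _; exact ⟨hb1, hb2, by omega, by omega⟩
  rcases Nat.lt_or_ge i ((q:ℕ)+3) with hi3 | hi3
  · -- i = q+2
    have heq : i = (q:ℕ)+2 := by omega
    subst heq
    have h1 : pval (N+1) (ins q σ) ((q:ℕ)+2-1) = N + 1 := by
      have : (q:ℕ)+2-1 = (q:ℕ)+1 := by omega
      rw [this]; exact pval_ins_self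
    have h2 : pval (N+1) (ins q σ) ((q:ℕ)+2) ≤ N + 1 := pval_le _ _
    constructor
    · rintro ⟨-, -, h3, -⟩; omega
    · rintro (⟨h, -⟩ | ⟨h, -⟩ | ⟨h, -⟩) <;> omega
  · -- i ≥ q+3
    rw [pval_ins_gt (i := i-1) (by omega) (by omega),
        pval_ins_gt (i := i) (by omega) (by omega),
        pval_ins_gt (i := i+1) (by omega) (by omega)]
    have e1 : i - 1 - 1 = i - 2 := by omega
    have e2 : i + 1 - 1 = i := by omega
    have e3 : i - 1 + 1 = i := by omega
    rw [e1, e2, e3]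
    constructor
    · rintro ⟨-, -, h3, h4⟩
      exact Or.inr (Or.inr ⟨hi3, by omega, by omega, h3, h4⟩)
    · rintro (⟨h, -⟩ | ⟨h, -⟩ | ⟨-, -, -, h3, h4⟩)
      · omega
      · omega
      · exact ⟨hb1, hb2, h3, h4⟩

def del (q : Fin (N+1)) (π : Equiv.Perm (Fin (N+1))) : Equiv.Perm (Fin N) :=
  Equiv.removeNone ((finSuccEquiv' q).symm.trans (π.trans (finSuccEquiv' (Fin.last N))))

lemma del_ins (q : Fin (N+1)) (σ : Equiv.Perm (Fin N)) : del q (ins q σ) = σ := by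
  apply Equiv.ext
  intro j
  have key : ((finSuccEquiv' q).symm.trans ((ins q σ).trans (finSuccEquiv' (Fin.last N))))
      (some j) = some (σ j) := by
    simp only [Equiv.trans_apply, finSuccEquiv'_symm_some, ins_apply_succAbove]
    exact finSuccEquiv'_last_apply_castSucc _
  have := Equiv.removeNone_some _ ⟨σ j, key⟩
  rw [key] at this
  exact Option.some_injective _ this

lemma ins_del (q : Fin (N+1)) (π : Equiv.Perm (Fin (N+1))) (h : π q = Fin.last N) :
    ins q (del q π) = π := by
  apply Equiv.ext
  intro x
  by_cases hx : x = q
  · subst hx; rw [ins_apply_self, h]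
  · obtain ⟨j, rfl⟩ := Fin.exists_succAbove_eq (Ne.symm (Ne.symm hx))
    rw [ins_apply_succAbove]
    have hne : π (q.succAbove j) ≠ Fin.last N := by
      rw [← h]
      exact fun hc => (Fin.succAbove_ne q j) (π.injective hc)
    obtain ⟨k, hk⟩ := Fin.exists_castSucc_eq.mpr hne
    have key : ((finSuccEquiv' q).symm.trans (π.trans (finSuccEquiv' (Fin.last N))))
        (some j) = some k := by
      simp only [Equiv.trans_apply, finSuccEquiv'_symm_some]
      rw [← hk]
      exact finSuccEquiv'_last_apply_castSucc _
    have := Equiv.removeNone_some _ ⟨k, key⟩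
    rw [key] at this
    have hdel : del q π j = k := Option.some_injective _ this
    rw [hdel]
    exact hk

lemma ins_peaks_iff {A : ℕ → Prop} {q : Fin (N+1)} {σ : Equiv.Perm (Fin N)}
    (hA : 1 ≤ (q:ℕ) → (q:ℕ)+1 ≤ N → A ((q:ℕ)+1)) :
    (∀ i ∈ peakSet (N+1) (ins q σ), A i) ↔
      (∀ j ∈ peakSet N σ,
        (j < (q:ℕ) ∧ A j) ∨ j = (q:ℕ) ∨ j = (q:ℕ)+1 ∨ ((q:ℕ)+2 ≤ j ∧ A (j+1))) := by
  constructor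
  · intro h j hj
    rcases lt_trichotomy j (q:ℕ) with hlt | heq | hgt
    · exact Or.inl ⟨hlt, h j (mem_peakSet_ins.mpr (Or.inl ⟨hlt, hj⟩))⟩
    · exact Or.inr (Or.inl heq)
    · rcases Nat.lt_or_ge j ((q:ℕ)+2) with h2 | h2
      · exact Or.inr (Or.inr (Or.inl (by omega)))
      · refine Or.inr (Or.inr (Or.inr ⟨h2, ?_⟩))
        apply h (j+1)
        apply mem_peakSet_ins.mpr
        refine Or.inr (Or.inr ⟨by omega, ?_⟩)
        simpa using hj
  · intro h i hi
    rcases mem_peakSet_ins.mp hi with ⟨hlt, hp⟩ | ⟨heq, hb1, hb2⟩ | ⟨hge, hp⟩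
    · rcases h i hp with ⟨-, hAi⟩ | h' | h' | ⟨h', -⟩ <;> first | exact hAi | omega
    · subst heq; exact hA (by omega) (by omega)
    · rcases h (i-1) hp with ⟨h', -⟩ | h' | h' | ⟨-, hAi⟩
      · omega
      · omega
      · omega
      · have hii : i - 1 + 1 = i := by omega
        rwa [hii] at hAi

lemma card_fiber (A : ℕ → Prop) [DecidablePred A] (q : Fin (N+1))
    (hA : 1 ≤ (q:ℕ) → (q:ℕ)+1 ≤ N → A ((q:ℕ)+1)) :
    (Finset.univ.filter fun π : Equiv.Perm (Fin (N+1)) =>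
        (∀ i ∈ peakSet (N+1) π, A i) ∧ π q = Fin.last N).card =
      G (fun j => (j < (q:ℕ) ∧ A j) ∨ j = (q:ℕ) ∨ j = (q:ℕ)+1 ∨ ((q:ℕ)+2 ≤ j ∧ A (j+1))) N := by
  unfold G
  apply Finset.card_bij' (fun π _ => del q π) (fun σ _ => ins q σ)
  · intro π hπ
    simp only [Finset.mem_filter, Finset.mem_univ, true_and] at hπ ⊢
    obtain ⟨hpk, hq⟩ := hπ
    rw [← ins_del q π hq] at hpk
    exact (ins_peaks_iff hA).mp hpk
  · intro σ hσ
    simp only [Finset.mem_filter, Finset.mem_univ, true_and] at hσ ⊢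
    exact ⟨(ins_peaks_iff hA).mpr hσ, ins_apply_self q σ⟩
  · intro π hπ
    simp only [Finset.mem_filter, Finset.mem_univ, true_and] at hπ
    exact ins_del q π hπ.2
  · intro σ _
    exact del_ins q σ

lemma card_fiber_zero (A : ℕ → Prop) [DecidablePred A] (q : Fin (N+1))
    (h1 : 1 ≤ (q:ℕ)) (h2 : (q:ℕ)+1 ≤ N) (hA : ¬ A ((q:ℕ)+1)) :
    (Finset.univ.filter fun π : Equiv.Perm (Fin (N+1)) =>
        (∀ i ∈ peakSet (N+1) π, A i) ∧ π q = Fin.last N).card = 0 := by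
  rw [Finset.card_eq_zero, Finset.filter_eq_empty_iff]
  rintro π -
  rintro ⟨hpk, hq⟩
  apply hA
  apply hpk
  rw [← ins_del q π hq]
  exact mem_peakSet_ins.mpr (Or.inr (Or.inl ⟨rfl, by omega, by omega⟩))

lemma G_succ (A : ℕ → Prop) [DecidablePred A] :
    G A (N+1) = ∑ q : Fin (N+1),
      (Finset.univ.filter fun π : Equiv.Perm (Fin (N+1)) =>
        (∀ i ∈ peakSet (N+1) π, A i) ∧ π q = Fin.last N).card := by
  unfold G
  rw [Finset.card_eq_sum_card_fiberwise
    (f := fun π : Equiv.Perm (Fin (N+1)) => π.symm (Fin.last N))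
    (t := Finset.univ) (fun _ _ => Finset.mem_univ _)]
  apply Finset.sum_congr rfl
  intro q _
  congr 1
  rw [Finset.filter_filter]
  apply Finset.filter_congr
  intro π _
  constructor
  · rintro ⟨h1, h2⟩
    exact ⟨h1, by rw [← h2]; simp⟩
  · rintro ⟨h1, h2⟩
    exact ⟨h1, by rw [← h2]; simp⟩

lemma sum_two {M : Type*} [AddCommMonoid M] {n : ℕ} (f : Fin n → M) (a b : Fin n)
    (hab : a ≠ b)
    (h0 : ∀ q, q ≠ a → q ≠ b → f q = 0) :
    ∑ q, f q = f a + f b := by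
  rw [← Finset.sum_subset (Finset.subset_univ ({a, b} : Finset (Fin n)))
      (fun x _ hx => h0 x (by simp at hx; tauto) (by simp at hx; tauto))]
  rw [Finset.sum_pair hab]

lemma sum_three {M : Type*} [AddCommMonoid M] {n : ℕ} (f : Fin n → M) (a b c : Fin n)
    (hab : a ≠ b) (hac : a ≠ c) (hbc : b ≠ c)
    (h0 : ∀ q, q ≠ a → q ≠ b → q ≠ c → f q = 0) :
    ∑ q, f q = f a + f b + f c := by
  rw [← Finset.sum_subset (Finset.subset_univ ({a, b, c} : Finset (Fin n)))
      (fun x _ hx => h0 x (by simp at hx; tauto) (by simp at hx; tauto) (by simp at hx; tauto))]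
  rw [Finset.sum_insert (by simp [hab, hac]), Finset.sum_pair hbc, add_assoc]

lemma peakSet_eq_empty_of_le_two {n : ℕ} (hn : n ≤ 2) (π : Equiv.Perm (Fin n)) :
    peakSet n π = ∅ := by
  ext i
  simp only [mem_peakSet_iff, Finset.notMem_empty, iff_false]
  rintro ⟨h1, h2, -⟩
  omega

lemma G_eq_of_le_two {A : ℕ → Prop} [DecidablePred A] {n : ℕ} (hn : n ≤ 2) :
    G A n = Nat.factorial n := by
  unfold G
  rw [Finset.filter_true_of_mem]
  · rw [Finset.card_univ, Fintype.card_perm, Fintype.card_fin]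
  · intro π _ i hi
    rw [peakSet_eq_empty_of_le_two hn] at hi
    exact absurd hi (Finset.notMem_empty i)

lemma sum_four {M : Type*} [AddCommMonoid M] {n : ℕ} (f : Fin n → M) (a b c d : Fin n)
    (hab : a ≠ b) (hac : a ≠ c) (had : a ≠ d) (hbc : b ≠ c) (hbd : b ≠ d) (hcd : c ≠ d)
    (h0 : ∀ q, q ≠ a → q ≠ b → q ≠ c → q ≠ d → f q = 0) :
    ∑ q, f q = f a + f b + f c + f d := by
  rw [← Finset.sum_subset (Finset.subset_univ ({a, b, c, d} : Finset (Fin n)))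
      (fun x _ hx => h0 x (by simp at hx; tauto) (by simp at hx; tauto) (by simp at hx; tauto)
        (by simp at hx; tauto))]
  rw [Finset.sum_insert (by simp [hab, hac, had]), Finset.sum_insert (by simp [hbc, hbd]),
    Finset.sum_pair hcd]
  simp [add_assoc]

def Aempty : ℕ → Prop := fun _ => False
def Asing (m : ℕ) : ℕ → Prop := fun j => j = m
def Apair (k : ℕ) : ℕ → Prop := fun j => j = k ∨ j = k + 1

instance : DecidablePred Aempty := fun _ => by unfold Aempty; infer_instance
instance (m : ℕ) : DecidablePred (Asing m) := fun _ => by unfold Asing; infer_instance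
instance (k : ℕ) : DecidablePred (Apair k) := fun _ => by unfold Apair; infer_instance

def fib (A : ℕ → Prop) [DecidablePred A] (N : ℕ) (q : Fin (N+1)) : ℕ :=
  (Finset.univ.filter fun π : Equiv.Perm (Fin (N+1)) =>
    (∀ i ∈ peakSet (N+1) π, A i) ∧ π q = Fin.last N).card

lemma G_succ' (A : ℕ → Prop) [DecidablePred A] : G A (N+1) = ∑ q : Fin (N+1), fib A N q :=
  G_succ A

lemma fib_zero (A : ℕ → Prop) [DecidablePred A] (q : Fin (N+1))
    (h1 : 1 ≤ (q:ℕ)) (h2 : (q:ℕ)+1 ≤ N) (hA : ¬ A ((q:ℕ)+1)) : fib A N q = 0 :=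
  card_fiber_zero A q h1 h2 hA

lemma fib_eval (A B : ℕ → Prop) [DecidablePred A] [DecidablePred B] {t : ℕ} (ht : t < N+1)
    (hA : 1 ≤ t → t+1 ≤ N → A (t+1))
    (hB : ∀ j, 2 ≤ j → j+1 ≤ N →
      (((j < t ∧ A j) ∨ j = t ∨ j = t+1 ∨ (t+2 ≤ j ∧ A (j+1))) ↔ B j)) :
    fib A N ⟨t, ht⟩ = G B N := by
  rw [fib, card_fiber A ⟨t, ht⟩ hA]
  exact G_congr (fun i hi1 hi2 => hB i hi1 hi2)

theorem master (n : ℕ) :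
    (1 ≤ n → G Aempty n = 2^(n-1)) ∧
    (∀ m, 2 ≤ m → m + 1 ≤ n → G (Asing m) n = ((n-1).choose (m-1) + 1) * 2^(n-2)) ∧
    (∀ k, 1 ≤ k → k + 2 ≤ n → G (Apair k) n = n.choose k * 2^(n-2)) := by
  induction n using Nat.strong_induction_on with
  | _ n IH =>
  by_cases hsmall : n ≤ 2
  · refine ⟨fun h1 => ?_, fun m hm1 hm2 => by omega, fun k hk1 hk2 => by omega⟩
    rw [G_eq_of_le_two hsmall]
    interval_cases n <;> rfl
  obtain ⟨b, rfl⟩ : ∃ b, n = b + 3 := ⟨n - 3, by omega⟩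
  obtain ⟨IH0, IH1, IH2⟩ := IH (b + 2) (by omega)
  have hpow : (2:ℕ) ^ (b+1) = 2 * 2 ^ b := by rw [pow_succ]; ring
  refine ⟨fun _ => ?_, fun m hm1 hm2 => ?_, fun k hk1 hk2 => ?_⟩
  -- ===================== L0 : empty =====================
  · show G Aempty ((b+2)+1) = 2^(b+3-1)
    rw [G_succ']
    have hz : ∀ q : Fin (b+2+1), q ≠ ⟨0, by omega⟩ → q ≠ ⟨b+2, by omega⟩ →
        fib Aempty (b+2) q = 0 := by
      intro q hqa hqb
      have h1 : (q:ℕ) ≠ 0 := fun h => hqa (Fin.ext h)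
      have h2 : (q:ℕ) ≠ b+2 := fun h => hqb (Fin.ext h)
      have h3 : (q:ℕ) < b+3 := q.isLt
      exact fib_zero _ q (by omega) (by omega) (fun h => h)
    rw [sum_two (fib Aempty (b+2)) ⟨0, by omega⟩ ⟨b+2, by omega⟩
        (by simp only [ne_eq, Fin.mk.injEq]; omega) hz]
    rw [fib_eval (N := b+2) (t := 0) Aempty Aempty (by omega)
        (fun h1 h2 => absurd h1 (by omega))
        (by intro j hj1 hj2; simp only [Aempty, Asing, Apair, and_false, false_and, or_false, false_or, iff_false, iff_true, true_and, and_true] <;> omega)]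
    rw [fib_eval (N := b+2) (t := b+2) Aempty Aempty (by omega)
        (fun h1 h2 => absurd h2 (by omega))
        (by intro j hj1 hj2; simp only [Aempty, Asing, Apair, and_false, false_and, or_false, false_or, iff_false, iff_true, true_and, and_true] <;> omega)]
    rw [IH0 (by omega)]
    have e1 : b + 2 - 1 = b + 1 := by omega
    have e2 : b + 3 - 1 = b + 2 := by omega
    rw [e1, e2, pow_succ, pow_succ, hpow]
    ring
  -- ===================== L1 : singleton =====================
  · obtain ⟨a, rfl⟩ : ∃ a, m = a + 2 := ⟨m - 2, by omega⟩
    have hab : a ≤ b := by omega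
    show G (Asing (a+2)) ((b+2)+1) = ((b+3-1).choose (a+2-1) + 1) * 2^(b+3-2)
    rw [G_succ']
    have hz : ∀ q : Fin (b+2+1), q ≠ ⟨0, by omega⟩ → q ≠ ⟨a+1, by omega⟩ →
        q ≠ ⟨b+2, by omega⟩ → fib (Asing (a+2)) (b+2) q = 0 := by
      intro q hqa hqb hqc
      have h1 : (q:ℕ) ≠ 0 := fun h => hqa (Fin.ext h)
      have h2 : (q:ℕ) ≠ a+1 := fun h => hqb (Fin.ext h)
      have h3 : (q:ℕ) ≠ b+2 := fun h => hqc (Fin.ext h)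
      have h4 : (q:ℕ) < b+3 := q.isLt
      refine fib_zero _ q (by omega) (by omega) ?_
      simp only [Aempty, Asing, Apair, and_false, false_and, or_false, false_or, iff_false, iff_true, true_and, and_true] <;> omega
    rw [sum_three (fib (Asing (a+2)) (b+2)) ⟨0, by omega⟩ ⟨a+1, by omega⟩ ⟨b+2, by omega⟩
        (by simp only [ne_eq, Fin.mk.injEq]; omega) (by simp only [ne_eq, Fin.mk.injEq]; omega) (by simp only [ne_eq, Fin.mk.injEq]; omega) hz]
    -- value at t = 0
    have v1 : fib (Asing (a+2)) (b+2) ⟨0, by omega⟩ = ((b+1).choose a + 1) * 2^b := by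
      rw [fib_eval (N := b+2) (t := 0) (Asing (a+2)) (Asing (a+1)) (by omega)
          (fun h1 h2 => absurd h1 (by omega))
          (by intro j hj1 hj2; simp only [Aempty, Asing, Apair, and_false, false_and, or_false, false_or, iff_false, iff_true, true_and, and_true] <;> omega)]
      rcases Nat.eq_zero_or_pos a with ha | ha
      · subst ha
        have : G (Asing 1) (b+2) = G Aempty (b+2) :=
          G_congr (by intro i hi1 hi2; simp only [Aempty, Asing, Apair, and_false, false_and, or_false, false_or, iff_false, iff_true, true_and, and_true] <;> omega)
        rw [this, IH0 (by omega)]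
        have e1 : b + 2 - 1 = b + 1 := by omega
        rw [e1, hpow]
        simp
      · rw [IH1 (a+1) (by omega) (by omega)]
        have e1 : b + 2 - 1 = b + 1 := by omega
        have e2 : a + 1 - 1 = a := by omega
        have e3 : b + 2 - 2 = b := by omega
        rw [e1, e2, e3]
    -- value at t = a+1
    have v2 : fib (Asing (a+2)) (b+2) ⟨a+1, by omega⟩ = (b+2).choose (a+1) * 2^b := by
      rw [fib_eval (N := b+2) (t := a+1) (Asing (a+2)) (Apair (a+1)) (by omega)
          (fun h1 h2 => by simp only [Asing])
          (by intro j hj1 hj2; simp only [Aempty, Asing, Apair, and_false, false_and, or_false, false_or, iff_false, iff_true, true_and, and_true] <;> omega)]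
      rcases Nat.lt_or_ge (a+1) b with hlt | hge
      · rw [IH2 (a+1) (by omega) (by omega)]
        have e3 : b + 2 - 2 = b := by omega
        rw [e3]
      · -- a = b or a+1 = b; from a ≤ b : a = b ∨ a + 1 = b
        rcases Nat.lt_or_ge a b with hab2 | hab2
        · -- a + 1 = b
          rw [IH2 (a+1) (by omega) (by omega)]
          have e3 : b + 2 - 2 = b := by omega
          rw [e3]
        · -- a = b
          have hab3 : a = b := by omega
          subst hab3
          have : G (Apair (a+1)) (a+2) = G (Asing (a+1)) (a+2) :=
            G_congr (by intro i hi1 hi2; simp only [Aempty, Asing, Apair, and_false, false_and, or_false, false_or, iff_false, iff_true, true_and, and_true] <;> omega)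
          rw [this]
          rcases Nat.eq_zero_or_pos a with ha | ha
          · subst ha
            rw [G_eq_of_le_two (by omega)]
            rfl
          · rw [IH1 (a+1) (by omega) (by omega)]
            have e1 : a + 2 - 1 = a + 1 := by omega
            have e2 : a + 1 - 1 = a := by omega
            have e3 : a + 2 - 2 = a := by omega
            rw [e1, e2, e3, Nat.choose_succ_self_right, Nat.choose_succ_self_right]
    -- value at t = b+2
    have v3 : fib (Asing (a+2)) (b+2) ⟨b+2, by omega⟩ = ((b+1).choose (a+1) + 1) * 2^b := by
      rw [fib_eval (N := b+2) (t := b+2) (Asing (a+2)) (Asing (a+2)) (by omega)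
          (fun h1 h2 => absurd h2 (by omega))
          (by intro j hj1 hj2; simp only [Aempty, Asing, Apair, and_false, false_and, or_false, false_or, iff_false, iff_true, true_and, and_true] <;> omega)]
      rcases Nat.lt_or_ge a b with hlt | hge
      · rw [IH1 (a+2) (by omega) (by omega)]
        have e1 : b + 2 - 1 = b + 1 := by omega
        have e2 : a + 2 - 1 = a + 1 := by omega
        have e3 : b + 2 - 2 = b := by omega
        rw [e1, e2, e3]
      · have hab3 : a = b := by omega
        subst hab3
        have : G (Asing (a+2)) (a+2) = G Aempty (a+2) :=
          G_congr (by intro i hi1 hi2; simp only [Aempty, Asing, Apair, and_false, false_and, or_false, false_or, iff_false, iff_true, true_and, and_true] <;> omega)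
        rw [this, IH0 (by omega)]
        have e1 : a + 2 - 1 = a + 1 := by omega
        rw [e1, Nat.choose_self, hpow]
    rw [v1, v2, v3]
    have pascal : (b+2).choose (a+1) = (b+1).choose a + (b+1).choose (a+1) :=
      Nat.choose_succ_succ (b+1) a
    have e1 : b + 3 - 1 = b + 2 := by omega
    have e2 : a + 2 - 1 = a + 1 := by omega
    have e3 : b + 3 - 2 = b + 1 := by omega
    rw [e1, e2, e3, pascal, hpow]
    ring
  -- ===================== L2 : pair =====================
  · rcases Nat.lt_or_ge k 2 with hk2 | hk2
    · -- k = 1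
      have hk1' : k = 1 := by omega
      subst hk1'
      show G (Apair 1) ((b+2)+1) = (b+3).choose 1 * 2^(b+3-2)
      rw [G_succ']
      have hz : ∀ q : Fin (b+2+1), q ≠ ⟨0, by omega⟩ → q ≠ ⟨1, by omega⟩ →
          q ≠ ⟨b+2, by omega⟩ → fib (Apair 1) (b+2) q = 0 := by
        intro q hqa hqb hqc
        have h1 : (q:ℕ) ≠ 0 := fun h => hqa (Fin.ext h)
        have h2 : (q:ℕ) ≠ 1 := fun h => hqb (Fin.ext h)
        have h3 : (q:ℕ) ≠ b+2 := fun h => hqc (Fin.ext h)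
        have h4 : (q:ℕ) < b+3 := q.isLt
        refine fib_zero _ q (by omega) (by omega) ?_
        simp only [Aempty, Asing, Apair, and_false, false_and, or_false, false_or, iff_false, iff_true, true_and, and_true] <;> omega
      rw [sum_three (fib (Apair 1) (b+2)) ⟨0, by omega⟩ ⟨1, by omega⟩ ⟨b+2, by omega⟩
          (by simp only [ne_eq, Fin.mk.injEq]; omega) (by simp only [ne_eq, Fin.mk.injEq]; omega) (by simp only [ne_eq, Fin.mk.injEq]; omega) hz]
      have w1 : fib (Apair 1) (b+2) ⟨0, by omega⟩ = 2^(b+1) := by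
        rw [fib_eval (N := b+2) (t := 0) (Apair 1) Aempty (by omega)
            (fun h1 h2 => absurd h1 (by omega))
            (by intro j hj1 hj2; simp only [Aempty, Asing, Apair, and_false, false_and, or_false, false_or, iff_false, iff_true, true_and, and_true] <;> omega)]
        rw [IH0 (by omega)]
        congr 1
      have w2 : fib (Apair 1) (b+2) ⟨1, by omega⟩ = (b+2) * 2^b := by
        rw [fib_eval (N := b+2) (t := 1) (Apair 1) (Apair 1) (by omega)
            (fun h1 h2 => Or.inr rfl)
            (by intro j hj1 hj2; simp only [Aempty, Asing, Apair, and_false, false_and, or_false, false_or, iff_false, iff_true, true_and, and_true] <;> omega)]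
        rcases Nat.eq_zero_or_pos b with hb | hb
        · subst hb
          rw [G_eq_of_le_two (by omega)]
          rfl
        · rw [IH2 1 (by omega) (by omega)]
          have e3 : b + 2 - 2 = b := by omega
          rw [e3, Nat.choose_one_right]
      have w3 : fib (Apair 1) (b+2) ⟨b+2, by omega⟩ = (b+2) * 2^b := by
        rw [fib_eval (N := b+2) (t := b+2) (Apair 1) (Asing 2) (by omega)
            (fun h1 h2 => absurd h2 (by omega))
            (by intro j hj1 hj2; simp only [Aempty, Asing, Apair, and_false, false_and, or_false, false_or, iff_false, iff_true, true_and, and_true] <;> omega)]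
        rcases Nat.eq_zero_or_pos b with hb | hb
        · subst hb
          rw [G_eq_of_le_two (by omega)]
          rfl
        · rw [IH1 2 (by omega) (by omega)]
          have e1 : b + 2 - 1 = b + 1 := by omega
          have e3 : b + 2 - 2 = b := by omega
          rw [e1, e3, Nat.choose_one_right]
      rw [w1, w2, w3, Nat.choose_one_right]
      have e3 : b + 3 - 2 = b + 1 := by omega
      rw [e3, hpow]
      ring
    · -- k ≥ 2
      obtain ⟨c, rfl⟩ : ∃ c, k = c + 2 := ⟨k - 2, by omega⟩
      have hcb : c + 1 ≤ b := by omega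
      show G (Apair (c+2)) ((b+2)+1) = (b+3).choose (c+2) * 2^(b+3-2)
      rw [G_succ']
      have hz : ∀ q : Fin (b+2+1), q ≠ ⟨0, by omega⟩ → q ≠ ⟨c+1, by omega⟩ →
          q ≠ ⟨c+2, by omega⟩ → q ≠ ⟨b+2, by omega⟩ → fib (Apair (c+2)) (b+2) q = 0 := by
        intro q hqa hqb hqc hqd
        have h1 : (q:ℕ) ≠ 0 := fun h => hqa (Fin.ext h)
        have h2 : (q:ℕ) ≠ c+1 := fun h => hqb (Fin.ext h)
        have h3 : (q:ℕ) ≠ c+2 := fun h => hqc (Fin.ext h)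
        have h4 : (q:ℕ) ≠ b+2 := fun h => hqd (Fin.ext h)
        have h5 : (q:ℕ) < b+3 := q.isLt
        refine fib_zero _ q (by omega) (by omega) ?_
        simp only [Aempty, Asing, Apair, and_false, false_and, or_false, false_or, iff_false, iff_true, true_and, and_true] <;> omega
      rw [sum_four (fib (Apair (c+2)) (b+2)) ⟨0, by omega⟩ ⟨c+1, by omega⟩ ⟨c+2, by omega⟩
          ⟨b+2, by omega⟩ (by simp only [ne_eq, Fin.mk.injEq]; omega) (by simp only [ne_eq, Fin.mk.injEq]; omega)
          (by simp only [ne_eq, Fin.mk.injEq]; omega) (by simp only [ne_eq, Fin.mk.injEq]; omega)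
          (by simp only [ne_eq, Fin.mk.injEq]; omega) (by simp only [ne_eq, Fin.mk.injEq]; omega) hz]
      have hu34 : G (Apair (c+2)) (b+2) = (b+2).choose (c+2) * 2^b := by
        rcases Nat.lt_or_ge (c+1) b with hlt | hge
        · rw [IH2 (c+2) (by omega) (by omega)]
          have e3 : b + 2 - 2 = b := by omega
          rw [e3]
        · have hcb3 : c + 1 = b := by omega
          subst hcb3
          have : G (Apair (c+2)) (c+3) = G (Asing (c+2)) (c+3) :=
            G_congr (by intro i hi1 hi2; simp only [Aempty, Asing, Apair, and_false, false_and, or_false, false_or, iff_false, iff_true, true_and, and_true] <;> omega)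
          rw [this, IH1 (c+2) (by omega) (by omega)]
          have e1 : c + 3 - 1 = c + 2 := by omega
          have e2 : c + 2 - 1 = c + 1 := by omega
          have e3 : c + 3 - 2 = c + 1 := by omega
          rw [e1, e2, e3, Nat.choose_succ_self_right]
          have : (c+1+2).choose (c+2) = c + 3 := Nat.choose_succ_self_right (c+2)
          rw [show c+1+2 = c+3 from rfl] at this
          rw [this]
      have u1 : fib (Apair (c+2)) (b+2) ⟨0, by omega⟩ = (b+2).choose (c+1) * 2^b := by
        rw [fib_eval (N := b+2) (t := 0) (Apair (c+2)) (Apair (c+1)) (by omega)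
            (fun h1 h2 => absurd h1 (by omega))
            (by intro j hj1 hj2; simp only [Aempty, Asing, Apair, and_false, false_and, or_false, false_or, iff_false, iff_true, true_and, and_true] <;> omega)]
        rw [IH2 (c+1) (by omega) (by omega)]
        have e3 : b + 2 - 2 = b := by omega
        rw [e3]
      have u2 : fib (Apair (c+2)) (b+2) ⟨c+1, by omega⟩ = (b+2).choose (c+1) * 2^b := by
        rw [fib_eval (N := b+2) (t := c+1) (Apair (c+2)) (Apair (c+1)) (by omega)
            (fun h1 h2 => Or.inl rfl)
            (by intro j hj1 hj2; simp only [Aempty, Asing, Apair, and_false, false_and, or_false, false_or, iff_false, iff_true, true_and, and_true] <;> omega)]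
        rw [IH2 (c+1) (by omega) (by omega)]
        have e3 : b + 2 - 2 = b := by omega
        rw [e3]
      have u3 : fib (Apair (c+2)) (b+2) ⟨c+2, by omega⟩ = (b+2).choose (c+2) * 2^b := by
        rw [fib_eval (N := b+2) (t := c+2) (Apair (c+2)) (Apair (c+2)) (by omega)
            (fun h1 h2 => Or.inr rfl)
            (by intro j hj1 hj2; simp only [Aempty, Asing, Apair, and_false, false_and, or_false, false_or, iff_false, iff_true, true_and, and_true] <;> omega)]
        exact hu34
      have u4 : fib (Apair (c+2)) (b+2) ⟨b+2, by omega⟩ = (b+2).choose (c+2) * 2^b := by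
        rw [fib_eval (N := b+2) (t := b+2) (Apair (c+2)) (Apair (c+2)) (by omega)
            (fun h1 h2 => absurd h2 (by omega))
            (by intro j hj1 hj2; simp only [Aempty, Asing, Apair, and_false, false_and, or_false, false_or, iff_false, iff_true, true_and, and_true] <;> omega)]
        exact hu34
      rw [u1, u2, u3, u4]
      have pascal : (b+3).choose (c+2) = (b+2).choose (c+1) + (b+2).choose (c+2) :=
        Nat.choose_succ_succ (b+2) (c+1)
      have e3 : b + 3 - 2 = b + 1 := by omega
      rw [e3, pascal, hpow]
      ring

theorem stmt_4_aux (m n : ℕ) (hm : 2 ≤ m) (hmn : m ≤ n - 1) :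
    ((Finset.univ.filter fun π : Equiv.Perm (Fin n) => peakSet n π = ({m} : Finset ℕ)).card : ℤ) =
      (((n - 1).choose (m - 1) : ℤ) - 1) * 2 ^ (n - 2) := by
  have hn3 : 3 ≤ n := by omega
  have hmn' : m + 1 ≤ n := by omega
  obtain ⟨h0, h1, h2⟩ := master n
  have hGs : G (Asing m) n = ((n-1).choose (m-1) + 1) * 2^(n-2) := h1 m hm hmn'
  have hG0 : G Aempty n = 2^(n-1) := h0 (by omega)
  have hsub : (Finset.univ.filter fun π : Equiv.Perm (Fin n) => ∀ i ∈ peakSet n π, Aempty i)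
      ⊆ (Finset.univ.filter fun π : Equiv.Perm (Fin n) => ∀ i ∈ peakSet n π, Asing m i) := by
    intro π hπ
    simp only [Finset.mem_filter, Finset.mem_univ, true_and] at hπ ⊢
    exact fun i hi => absurd (hπ i hi) (fun h => h)
  have hset : (Finset.univ.filter fun π : Equiv.Perm (Fin n) => peakSet n π = ({m} : Finset ℕ)) =
      (Finset.univ.filter fun π : Equiv.Perm (Fin n) => ∀ i ∈ peakSet n π, Asing m i) \
      (Finset.univ.filter fun π : Equiv.Perm (Fin n) => ∀ i ∈ peakSet n π, Aempty i) := by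
    ext π
    simp only [Finset.mem_sdiff, Finset.mem_filter, Finset.mem_univ, true_and]
    constructor
    · intro h
      refine ⟨fun i hi => ?_, fun hall => ?_⟩
      · rw [h] at hi
        exact Finset.mem_singleton.mp hi
      · have hmem : m ∈ peakSet n π := h ▸ Finset.mem_singleton_self m
        exact hall m hmem
    · rintro ⟨hsub', hne⟩
      have hsubset : peakSet n π ⊆ {m} := fun i hi => Finset.mem_singleton.mpr (hsub' i hi)
      rcases Finset.subset_singleton_iff.mp hsubset with he | he
      · refine absurd (fun i hi => ?_) hne
        rw [he] at hi
        exact absurd hi (Finset.notMem_empty i)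
      · exact he
  have hcard : (Finset.univ.filter fun π : Equiv.Perm (Fin n) =>
      peakSet n π = ({m} : Finset ℕ)).card = G (Asing m) n - G Aempty n := by
    rw [hset, Finset.card_sdiff_of_subset hsub]
    rfl
  rw [hcard, hGs, hG0]
  have hch : 1 ≤ (n-1).choose (m-1) := Nat.choose_pos (by omega)
  have hpow : (2:ℕ)^(n-1) = 2 * 2^(n-2) := by
    have e : n - 1 = (n-2) + 1 := by omega
    rw [e, pow_succ]
    ring
  have hle : 2^(n-1) ≤ ((n-1).choose (m-1) + 1) * 2^(n-2) := by
    have h2 : 2 ≤ (n-1).choose (m-1) + 1 := by omega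
    calc 2^(n-1) = 2 * 2^(n-2) := hpow
    _ ≤ ((n-1).choose (m-1) + 1) * 2^(n-2) := Nat.mul_le_mul_right _ h2
  rw [Nat.cast_sub hle]
  push_cast
  have hpz : ((2:ℤ))^(n-1) = 2 * 2^(n-2) := by exact_mod_cast congrArg (Nat.cast (R := ℤ)) hpow
  rw [hpz]
  ring

/-- `P(S;n)`: permutations of `[n]` with peak set exactly `S`. -/
def peakPerms (S : Finset ℕ) (n : ℕ) : Finset (Equiv.Perm (Fin n)) :=
  Finset.univ.filter fun π => peakSet n π = S

/-- For `2 ≤ m ≤ n-1`, `#P({m};n) = (C(n-1,m-1) - 1) * 2^(n-2)`. -/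
theorem stmt_4 (m n : ℕ) (hm : 2 ≤ m) (hmn : m ≤ n - 1) :
    ((peakPerms ({m} : Finset ℕ) n).card : ℤ) =
      (((n - 1).choose (m - 1) : ℤ) - 1) * 2 ^ (n - 2) := by
  exact stmt_4_aux m n hm hmn
end

section
/- For integers m, n with 2 ≤ m ≤ n, the peak polynomial of the singleton set {m} expands in the shifted binomial basis with coefficients C(m−1,k): that is, C(n−1, m−1) − 1 = ∑_{k=1}^{m−1} C(m−1, k)·C(n−m, k), where C(a,b) denotes the binomial coefficient. In particular all coefficients in this expansion are nonnegative integers. -/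
/-- Diagonal form of Vandermonde's identity. -/
lemma nat_vandermonde_diag (a b : ℕ) :
    (a + b).choose a = ∑ k ∈ Finset.range (a + 1), a.choose k * b.choose k := by
  rw [Nat.add_choose_eq]
  have h1 : ∑ ij ∈ Finset.HasAntidiagonal.antidiagonal a, a.choose ij.1 * b.choose ij.2
      = ∑ ij ∈ Finset.HasAntidiagonal.antidiagonal a, a.choose ij.2 * b.choose ij.2 := by
    refine Finset.sum_congr rfl fun ij hij => ?_
    simp only [Finset.HasAntidiagonal.mem_antidiagonal] at hij
    congr 1
    rw [← Nat.choose_symm (show ij.2 ≤ a by omega)]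
    congr 1
    omega
  rw [h1, Finset.Nat.sum_antidiagonal_eq_sum_range_succ_mk, ← Finset.sum_range_reflect]
  refine Finset.sum_congr rfl fun k hk => ?_
  simp only [Finset.mem_range] at hk
  congr 2 <;> omega

/-- For `2 ≤ m ≤ n`, the peak polynomial of `{m}` expands with nonnegative
coefficients: `C(n-1,m-1) - 1 = ∑_{k=1}^{m-1} C(m-1,k) C(n-m,k)`. -/
theorem stmt_12 (m n : ℕ) (hm : 2 ≤ m) (hmn : m ≤ n) :
    ((n - 1).choose (m - 1) : ℤ) - 1 =
      ∑ k ∈ Finset.Icc 1 (m - 1), ((m - 1).choose k : ℤ) * ((n - m).choose k : ℤ) := by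
  have key := nat_vandermonde_diag (m - 1) (n - m)
  rw [show m - 1 + (n - m) = n - 1 by omega] at key
  have hsplit : ∑ k ∈ Finset.range (m - 1 + 1), (m - 1).choose k * (n - m).choose k
      = 1 + ∑ k ∈ Finset.Icc 1 (m - 1), (m - 1).choose k * (n - m).choose k := by
    rw [Finset.range_eq_Ico, Finset.sum_eq_sum_Ico_succ_bot (by omega)]
    simp [Finset.Ico_add_one_right_eq_Icc]
  rw [hsplit] at key
  rw [show ((n - 1).choose (m - 1) : ℤ)
      = ((1 + ∑ k ∈ Finset.Icc 1 (m - 1), (m - 1).choose k * (n - m).choose k : ℕ) : ℤ) by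
    exact_mod_cast congrArg (fun x : ℕ => (x : ℤ)) key]
  push_cast
  ring
end

section
/- Fix an integer m ≥ 4 and for each k ≥ 0 set C_k = (m−3)·C(m−2, k−1) + (m−2)·C(m−2, k) − C(m−2, k+m−3), where C(a,b) denotes the binomial coefficient (equal to 0 when b < 0 or b > a). Then: (i) for every integer n ≥ m, (m−3)·C(n−2, m−1) + (m−2)·C(n−2, m−2) − (n−2) = ∑_{k=0}^{m−1} C_k · C(n−m, k); and (ii) C_k ≥ 0 for every k ≥ 0. -/
lemma vander (a d r : ℕ) :
    (a + d).choose r = ∑ k ∈ Finset.range (r + 1), a.choose (r - k) * d.choose k := by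
  rw [add_comm a d, Nat.add_choose_eq, Finset.Nat.sum_antidiagonal_eq_sum_range_succ_mk]
  exact Finset.sum_congr rfl fun k _ => mul_comm _ _

lemma L1nat (m d : ℕ) (hm : 4 ≤ m) :
    ∑ k ∈ Finset.range m, (if 1 ≤ k then (m - 2).choose (k - 1) else 0) * d.choose k
      = (m - 2 + d).choose (m - 1) := by
  rw [vander (m - 2) d (m - 1), show m - 1 + 1 = m by omega]
  apply Finset.sum_congr rfl
  intro k hk
  simp only [Finset.mem_range] at hk
  rcases Nat.eq_zero_or_pos k with h0 | h1
  · subst h0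
    simp [Nat.choose_eq_zero_of_lt (show m - 2 < m - 1 by omega)]
  · rw [if_pos (show 1 ≤ k by omega)]
    congr 1
    rw [show m - 1 - k = (m - 2) - (k - 1) by omega, Nat.choose_symm (by omega)]

lemma L2nat (m d : ℕ) (hm : 4 ≤ m) :
    ∑ k ∈ Finset.range m, (m - 2).choose k * d.choose k = (m - 2 + d).choose (m - 2) := by
  rw [vander (m - 2) d (m - 2), show m - 2 + 1 = m - 1 by omega]
  rw [show (∑ k ∈ Finset.range m, (m - 2).choose k * d.choose k)
      = ∑ k ∈ Finset.range (m - 1), (m - 2).choose k * d.choose k from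
    (Finset.sum_subset (Finset.range_subset_range.2 (show m - 1 ≤ m by omega))
      (fun k _ hk2 => by
        simp only [Finset.mem_range, not_lt] at hk2
        rw [Nat.choose_eq_zero_of_lt (show m - 2 < k by omega), zero_mul])).symm]
  apply Finset.sum_congr rfl
  intro k hk
  simp only [Finset.mem_range] at hk
  rw [Nat.choose_symm (show k ≤ m - 2 by omega)]

lemma L3nat (m d : ℕ) (hm : 4 ≤ m) :
    ∑ k ∈ Finset.range m, (m - 2).choose (k + m - 3) * d.choose k = (m - 2) + d := by
  rw [← Finset.sum_subset (Finset.range_subset_range.2 (show 2 ≤ m by omega))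
    (fun k _ hk => by
      simp only [Finset.mem_range, not_lt] at hk
      rw [Nat.choose_eq_zero_of_lt (show m - 2 < k + m - 3 by omega), zero_mul])]
  rw [Finset.sum_range_succ, Finset.sum_range_one]
  rw [show 0 + m - 3 = (m - 2) - 1 by omega, Nat.choose_symm (by omega),
    Nat.choose_one_right, show 1 + m - 3 = m - 2 by omega, Nat.choose_self,
    Nat.choose_zero_right, Nat.choose_one_right]
  ring

/-- For `m ≥ 4` and `C_k = (m-3)C(m-2,k-1) + (m-2)C(m-2,k) - C(m-2,k+m-3)`
(with `C(a,b) = 0` for `b < 0`): (i) for all `n ≥ m`,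
`(m-3)C(n-2,m-1) + (m-2)C(n-2,m-2) - (n-2) = ∑_{k=0}^{m-1} C_k C(n-m,k)`, and
(ii) `C_k ≥ 0` for all `k`. -/
theorem stmt_13 (m : ℕ) (hm : 4 ≤ m) (C : ℕ → ℤ)
    (hC : ∀ k, C k =
      (if 1 ≤ k then ((m : ℤ) - 3) * ((m - 2).choose (k - 1) : ℤ) else 0)
        + ((m : ℤ) - 2) * ((m - 2).choose k : ℤ) - ((m - 2).choose (k + m - 3) : ℤ)) :
    (∀ n : ℕ, m ≤ n →
      ((m : ℤ) - 3) * ((n - 2).choose (m - 1) : ℤ)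
          + ((m : ℤ) - 2) * ((n - 2).choose (m - 2) : ℤ) - ((n : ℤ) - 2) =
        ∑ k ∈ Finset.range m, C k * ((n - m).choose k : ℤ)) ∧
    (∀ k, 0 ≤ C k) := by
  constructor
  · intro n hn
    set d := n - m with hd
    have hn2 : n - 2 = m - 2 + d := by omega
    have hnz : (n : ℤ) - 2 = ((m - 2 : ℕ) : ℤ) + (d : ℤ) := by omega
    have e1 := L1nat m d hm
    have e2 := L2nat m d hm
    have e3 := L3nat m d hm
    have key : ∑ k ∈ Finset.range m, C k * ((d).choose k : ℤ)
        = ((m : ℤ) - 3) *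
            ((∑ k ∈ Finset.range m,
              (if 1 ≤ k then (m - 2).choose (k - 1) else 0) * d.choose k : ℕ) : ℤ)
          + ((m : ℤ) - 2) *
            ((∑ k ∈ Finset.range m, (m - 2).choose k * d.choose k : ℕ) : ℤ)
          - ((∑ k ∈ Finset.range m, (m - 2).choose (k + m - 3) * d.choose k : ℕ) : ℤ) := by
      push_cast
      rw [Finset.mul_sum, Finset.mul_sum, ← Finset.sum_add_distrib, ← Finset.sum_sub_distrib]
      apply Finset.sum_congr rfl
      intro k _
      rw [hC k]
      split_ifs with h <;> ring
    rw [key, e1, e2, e3, hn2, hnz]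
    push_cast
    ring
  · intro k
    rw [hC k]
    have hm4 : (4 : ℤ) ≤ (m : ℤ) := by exact_mod_cast hm
    match k with
    | 0 =>
      rw [if_neg (by omega), show 0 + m - 3 = (m - 2) - 1 by omega,
        Nat.choose_symm (by omega), Nat.choose_one_right, Nat.choose_zero_right]
      have : ((m - 2 : ℕ) : ℤ) = (m : ℤ) - 2 := by omega
      rw [this]
      ring_nf
      omega
    | 1 =>
      rw [if_pos le_rfl, show (1 : ℕ) - 1 = 0 from rfl, Nat.choose_zero_right,
        Nat.choose_one_right, show 1 + m - 3 = m - 2 by omega, Nat.choose_self]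
      have : ((m - 2 : ℕ) : ℤ) = (m : ℤ) - 2 := by omega
      rw [this]
      nlinarith
    | (j + 2) =>
      rw [Nat.choose_eq_zero_of_lt (show m - 2 < j + 2 + m - 3 by omega)]
      rw [if_pos (by omega), show j + 2 - 1 = j + 1 from rfl]
      have h1 : (0 : ℤ) ≤ ((m : ℤ) - 3) * ((m - 2).choose (j + 1) : ℤ) :=
        mul_nonneg (by omega) (by positivity)
      have h2 : (0 : ℤ) ≤ ((m : ℤ) - 2) * ((m - 2).choose (j + 2) : ℤ) :=
        mul_nonneg (by omega) (by positivity)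
      push_cast
      linarith
end

section
/- For integers m, n with 2 ≤ m ≤ n−1, the number of permutations π of [n] whose combined set of peaks and valleys is exactly {m} (so that m is a peak of π) equals C(n−1, m−1), where C(a,b) denotes the binomial coefficient; that is, #PV(m;n) = C(n−1, m−1). -/
/-- The valley set of a permutation of `[n]`: indices `i` with `2 ≤ i ≤ n-1` and
`a_{i-1} > a_i < a_{i+1}`. -/
def valleySet (n : ℕ) (π : Equiv.Perm (Fin n)) : Finset ℕ :=
  (Finset.range n).filter fun i =>
    2 ≤ i ∧ i + 1 ≤ n ∧ pval n π i < pval n π (i - 1) ∧ pval n π i < pval n π (i + 1)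

/-- The combined set of peaks and valleys of `π`. -/
def pvSet (n : ℕ) (π : Equiv.Perm (Fin n)) : Finset ℕ :=
  peakSet n π ∪ valleySet n π

/-- `PV(S;n)`: permutations of `[n]` whose set of peaks and valleys is exactly `S`
and such that the smallest element of `S` is a peak. -/
def pvPerms (S : Finset ℕ) (n : ℕ) : Finset (Equiv.Perm (Fin n)) :=
  Finset.univ.filter fun π =>
    pvSet n π = S ∧ ∀ i ∈ S, (∀ j ∈ S, i ≤ j) → i ∈ peakSet n π

def Uni (m n : ℕ) (π : Equiv.Perm (Fin n)) : Prop :=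
  (∀ j, 1 ≤ j → j < m → pval n π j < pval n π (j + 1)) ∧
  (∀ j, m ≤ j → j < n → pval n π (j + 1) < pval n π j)

section aux
variable {m n : ℕ} (π : Equiv.Perm (Fin n))

lemma pval_def {i : ℕ} (h1 : 1 ≤ i) (h2 : i ≤ n) :
    pval n π i = ((π ⟨i - 1, by omega⟩ : Fin n) : ℕ) + 1 := by
  unfold pval; rw [dif_pos (by omega)]

lemma pval_lt_iff' {i j : ℕ} (hi1 : 1 ≤ i) (hi2 : i ≤ n) (hj1 : 1 ≤ j) (hj2 : j ≤ n) :
    pval n π i < pval n π j ↔ π ⟨i - 1, by omega⟩ < π ⟨j - 1, by omega⟩ := by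
  rw [pval_def π hi1 hi2, pval_def π hj1 hj2, Fin.lt_def]
  omega

lemma pval_ne {i j : ℕ} (hi1 : 1 ≤ i) (hi2 : i ≤ n) (hj1 : 1 ≤ j) (hj2 : j ≤ n)
    (hij : i ≠ j) : pval n π i ≠ pval n π j := by
  rw [pval_def π hi1 hi2, pval_def π hj1 hj2]
  intro h
  have h2 : π ⟨i - 1, by omega⟩ = π ⟨j - 1, by omega⟩ := Fin.ext (by omega)
  have := π.injective h2
  simp only [Fin.mk.injEq] at this
  omega

lemma uni_mono_left (h : Uni m n π) (hmn : m ≤ n) :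
    ∀ i j, 1 ≤ i → i < j → j ≤ m → pval n π i < pval n π j := by
  intro i j hi hij hjm
  induction j, hij using Nat.le_induction with
  | base => exact h.1 i hi (by omega)
  | succ j hj ih => exact lt_trans (ih (by omega)) (h.1 j (by omega) (by omega))

lemma uni_mono_right (h : Uni m n π) :
    ∀ i j, m ≤ i → i < j → j ≤ n → pval n π j < pval n π i := by
  intro i j hi hij hjn
  induction j, hij using Nat.le_induction with
  | base => exact h.2 i hi (by omega)
  | succ j hj ih => exact lt_trans (h.2 j (by omega) (by omega)) (ih (by omega))

lemma mem_peakSet {i : ℕ} : i ∈ peakSet n π ↔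
    i < n ∧ 2 ≤ i ∧ i + 1 ≤ n ∧ pval n π (i - 1) < pval n π i ∧ pval n π (i + 1) < pval n π i := by
  simp [peakSet, Finset.mem_filter, and_assoc]

lemma mem_valleySet {i : ℕ} : i ∈ valleySet n π ↔
    i < n ∧ 2 ≤ i ∧ i + 1 ≤ n ∧ pval n π i < pval n π (i - 1) ∧ pval n π i < pval n π (i + 1) := by
  simp [valleySet, Finset.mem_filter, and_assoc]

lemma uni_peakSet' (hm : 2 ≤ m) (hmn : m + 1 ≤ n) (h : Uni m n π) :
    peakSet n π = {m} := by
  ext i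
  rw [mem_peakSet, Finset.mem_singleton]
  constructor
  · rintro ⟨hin, h2, hin1, hp1, hp2⟩
    by_contra hne
    rcases lt_or_gt_of_ne hne with hlt | hgt
    · exact absurd (h.1 i (by omega) hlt) (by omega)
    · have := uni_mono_right π h (i - 1) i (by omega) (by omega) (by omega)
      omega
  · rintro rfl
    refine ⟨by omega, hm, by omega, ?_, h.2 i le_rfl (by omega)⟩
    have h1 := h.1 (i - 1) (by omega) (by omega)
    rwa [show i - 1 + 1 = i by omega] at h1

lemma uni_valleySet' (hm : 2 ≤ m) (hmn : m + 1 ≤ n) (h : Uni m n π) :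
    valleySet n π = ∅ := by
  ext i
  simp only [Finset.notMem_empty, iff_false, mem_valleySet]
  rintro ⟨hin, h2, hin1, hv1, hv2⟩
  rcases le_or_gt i m with hle | hgt
  · exact absurd (h.1 (i - 1) (by omega) (by omega)) (by rw [show i - 1 + 1 = i by omega]; omega)
  · exact absurd (h.2 i (by omega) (by omega)) (by omega)

lemma uni_of_pv' (hm : 2 ≤ m) (hmn : m + 1 ≤ n)
    (hv : valleySet n π = ∅) (hp : peakSet n π ⊆ {m}) (hpm : m ∈ peakSet n π) :
    Uni m n π := by
  rw [mem_peakSet] at hpm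
  obtain ⟨-, -, -, hp1, hp2⟩ := hpm
  have novalley : ∀ i, i ∉ valleySet n π := by rw [hv]; simp
  constructor
  · -- downward induction
    have key : ∀ k j, 1 ≤ j → j < m → m - 1 - j ≤ k → pval n π j < pval n π (j + 1) := by
      intro k
      induction k with
      | zero =>
        intro j h1 h2 h3
        have : j = m - 1 := by omega
        subst this
        rwa [show m - 1 + 1 = m by omega]
      | succ k ih =>
        intro j h1 h2 h3
        rcases eq_or_lt_of_le (show j ≤ m - 1 by omega) with he | hlt
        · subst he; rwa [show m - 1 + 1 = m by omega]
        · have hnext := ih (j + 1) (by omega) (by omega) (by omega)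
          by_contra hc
          have hne := pval_ne π (show 1 ≤ j by omega) (by omega) (show 1 ≤ j + 1 by omega)
            (by omega) (by omega)
          have hlt2 : pval n π (j + 1) < pval n π j := by omega
          exact novalley (j + 1) (by
            rw [mem_valleySet]
            exact ⟨by omega, by omega, by omega, by rwa [show j + 1 - 1 = j by omega], hnext⟩)
    exact fun j h1 h2 => key (m - 1 - j) j h1 h2 le_rfl
  · intro j hj hjn
    induction j, hj using Nat.le_induction with
    | base => exact hp2
    | succ j hmj ih =>
      have hprev : pval n π (j + 1) < pval n π j := ih (by omega)
      by_contra hc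
      have hne := pval_ne π (show 1 ≤ j + 1 by omega) (by omega) (show 1 ≤ j + 1 + 1 by omega)
        (by omega) (by omega)
      have hlt2 : pval n π (j + 1) < pval n π (j + 1 + 1) := by omega
      exact novalley (j + 1) (by
        rw [mem_valleySet]
        exact ⟨by omega, by omega, by omega, by rwa [show j + 1 - 1 = j by omega], hlt2⟩)

/-- 0-based position comparison, increasing part. -/
lemma uni_posA' (h : Uni m n π) (hmn : m ≤ n) (p q : Fin n)
    (hpq : (p : ℕ) < q) (hq : (q : ℕ) ≤ m - 1) : π p < π q := by
  have := uni_mono_left π h hmn (p + 1) (q + 1) (by omega) (by omega) (by omega)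
  rw [pval_lt_iff' π (by omega) (by omega) (by omega) (by omega)] at this
  convert this using 2 <;> exact Fin.ext (by simp)

/-- 0-based position comparison, decreasing part. -/
lemma uni_posB' (h : Uni m n π) (p q : Fin n)
    (hp : m - 1 ≤ (p : ℕ)) (hpq : (p : ℕ) < q) : π q < π p := by
  have hm1 : 1 ≤ m ∨ m = 0 := by omega
  have := uni_mono_right π h (p + 1) (q + 1) (by omega) (by omega) (by omega)
  rw [pval_lt_iff' π (by omega) (by omega) (by omega) (by omega)] at this
  convert this using 2 <;> exact Fin.ext (by simp)

lemma mem_pvPerms_iff_uni (hm : 2 ≤ m) (hmn : m + 1 ≤ n) :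
    π ∈ pvPerms ({m} : Finset ℕ) n ↔ Uni m n π := by
  rw [pvPerms, Finset.mem_filter]; simp only [Finset.mem_univ, true_and, pvSet]
  constructor
  · rintro ⟨hu, hpk⟩
    have hpm : m ∈ peakSet n π := hpk m (Finset.mem_singleton_self m)
      (fun j hj => le_of_eq (Finset.mem_singleton.mp hj).symm)
    have hsub : peakSet n π ⊆ {m} := fun x hx => hu ▸ Finset.mem_union_left _ hx
    have hvsub : valleySet n π ⊆ {m} := fun x hx => hu ▸ Finset.mem_union_right _ hx
    have hv : valleySet n π = ∅ := by
      ext x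
      simp only [Finset.notMem_empty, iff_false]
      intro hx
      have hxm := Finset.mem_singleton.mp (hvsub hx)
      subst hxm
      simp only [peakSet, valleySet, Finset.mem_filter] at hpm hx
      omega
    exact uni_of_pv' π hm hmn hv hsub hpm
  · intro h
    have hp := uni_peakSet' π hm hmn h
    have hv := uni_valleySet' π hm hmn h
    refine ⟨by rw [hp, hv]; simp, ?_⟩
    intro i hi _
    rw [Finset.mem_singleton] at hi
    subst hi
    rw [hp]; simp

end aux

/-- For `2 ≤ m ≤ n-1`, `#PV(m;n) = C(n-1,m-1)`. -/
theorem stmt_16 (m n : ℕ) (hm : 2 ≤ m) (hmn : m ≤ n - 1) :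
    (pvPerms ({m} : Finset ℕ) n).card = (n - 1).choose (m - 1) := by
  have hn : m + 1 ≤ n := by omega
  set top : Fin n := ⟨n - 1, by omega⟩ with htop
  set B : Finset (Finset (Fin n)) := (Finset.univ.erase top).powersetCard (m - 1) with hB
  have hcastle : m - 1 ≤ n := by omega
  have hBcard : B.card = (n - 1).choose (m - 1) := by
    rw [hB, Finset.card_powersetCard, Finset.card_erase_of_mem (Finset.mem_univ _)]
    congr 1
    simp [Fintype.card_fin]
  rw [← hBcard]
  have le_top : ∀ x : Fin n, x ≤ top := fun x => by
    rw [Fin.le_def]; have := x.isLt; simp [htop]; omega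
  apply Finset.card_bij
    (fun π _ => Finset.image (fun j : Fin (m - 1) => π (Fin.castLE hcastle j)) Finset.univ)
  -- maps into B
  · intro π hπ
    have h := (mem_pvPerms_iff_uni π hm hn).mp hπ
    rw [hB, Finset.mem_powersetCard]
    constructor
    · intro v hv
      rw [Finset.mem_image] at hv
      obtain ⟨j, -, rfl⟩ := hv
      refine Finset.mem_erase.mpr ⟨?_, Finset.mem_univ _⟩
      have hlt : π (Fin.castLE hcastle j) < π ⟨m - 1, by omega⟩ :=
        uni_posA' π h (by omega) _ _ (by simpa using j.isLt) (by simp)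
      have := le_top (π ⟨m - 1, by omega⟩)
      exact ne_of_lt (lt_of_lt_of_le hlt this)
    · rw [Finset.card_image_of_injective _
        (fun a b hab => Fin.castLE_injective hcastle (π.injective hab))]
      simp
  -- injective
  · intro π hπ σ hσ hT
    have hπu := (mem_pvPerms_iff_uni π hm hn).mp hπ
    have hσu := (mem_pvPerms_iff_uni σ hm hn).mp hσ
    set T : Finset (Fin n) :=
      Finset.image (fun j : Fin (m - 1) => π (Fin.castLE hcastle j)) Finset.univ with hTdef
    have hTcard : T.card = m - 1 := by
      rw [hTdef, Finset.card_image_of_injective _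
        (fun a b hab => Fin.castLE_injective hcastle (π.injective hab))]
      simp
    set Tc : Finset (Fin n) := Finset.univ \ T with hTcdef
    have hTccard : Tc.card = n - m + 1 := by
      rw [hTcdef, Finset.card_sdiff_of_subset (Finset.subset_univ _), hTcard]
      simp; omega
    -- increasing parts agree
    have left : ∀ τ : Equiv.Perm (Fin n), Uni m n τ →
        Finset.image (fun j : Fin (m - 1) => τ (Fin.castLE hcastle j)) Finset.univ = T →
        ∀ j : Fin (m - 1), τ (Fin.castLE hcastle j) = T.orderEmbOfFin hTcard j := by
      intro τ hτ hτT j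
      have := Finset.orderEmbOfFin_unique hTcard
        (f := fun j : Fin (m - 1) => τ (Fin.castLE hcastle j))
        (fun x => by rw [← hτT]; exact Finset.mem_image_of_mem _ (Finset.mem_univ x))
        (fun a b hab => uni_posA' τ hτ (by omega) _ _ (by simpa using hab) (by simpa using b.isLt.le))
      exact congrFun this j
    have right : ∀ τ : Equiv.Perm (Fin n), Uni m n τ →
        Finset.image (fun j : Fin (m - 1) => τ (Fin.castLE hcastle j)) Finset.univ = T →
        ∀ j : Fin (n - m + 1), τ ⟨n - 1 - (j : ℕ), by omega⟩ = Tc.orderEmbOfFin hTccard j := by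
      intro τ hτ hτT j
      have hmem : ∀ x : Fin (n - m + 1), τ ⟨n - 1 - (x : ℕ), by omega⟩ ∈ Tc := by
        intro x
        rw [hTcdef, Finset.mem_sdiff]
        refine ⟨Finset.mem_univ _, ?_⟩
        rw [← hτT, Finset.mem_image]
        rintro ⟨a, -, ha⟩
        have := τ.injective ha
        have hx := x.isLt
        have ha2 := a.isLt
        simp only [Fin.ext_iff, Fin.coe_castLE] at this
        omega
      have hmono : StrictMono (fun x : Fin (n - m + 1) => τ ⟨n - 1 - (x : ℕ), by omega⟩) := by
        intro a b hab
        refine uni_posB' τ hτ _ _ ?_ ?_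
        · have := b.isLt; simp; omega
        · have := b.isLt; simp only [Fin.lt_def] at hab; simp; omega
      exact congrFun (Finset.orderEmbOfFin_unique hTccard hmem hmono) j
    apply Equiv.ext
    intro q
    rcases lt_or_ge (q : ℕ) (m - 1) with hq | hq
    · have e : Fin.castLE hcastle ⟨(q : ℕ), hq⟩ = q := Fin.ext (by simp)
      calc π q = π (Fin.castLE hcastle ⟨(q : ℕ), hq⟩) := congrArg π e.symm
        _ = T.orderEmbOfFin hTcard ⟨(q : ℕ), hq⟩ := left π hπu rfl _
        _ = σ (Fin.castLE hcastle ⟨(q : ℕ), hq⟩) := (left σ hσu hT.symm _).symm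
        _ = σ q := congrArg σ e
    · have hql := q.isLt
      have hjlt : n - 1 - (q : ℕ) < n - m + 1 := by omega
      have e : (⟨n - 1 - ((⟨n - 1 - (q : ℕ), hjlt⟩ : Fin (n - m + 1)) : ℕ), by omega⟩ : Fin n) = q :=
        Fin.ext (by simp; omega)
      calc π q = π ⟨n - 1 - ((⟨n - 1 - (q : ℕ), hjlt⟩ : Fin (n - m + 1)) : ℕ), by omega⟩ :=
            congrArg π e.symm
        _ = Tc.orderEmbOfFin hTccard ⟨n - 1 - (q : ℕ), hjlt⟩ := right π hπu rfl _
        _ = σ ⟨n - 1 - ((⟨n - 1 - (q : ℕ), hjlt⟩ : Fin (n - m + 1)) : ℕ), by omega⟩ :=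
            (right σ hσu hT.symm _).symm
        _ = σ q := congrArg σ e
  -- surjective
  · intro T hT
    rw [hB, Finset.mem_powersetCard] at hT
    obtain ⟨hTsub, hTcard⟩ := hT
    set Tc : Finset (Fin n) := Finset.univ \ T with hTcdef
    have hTccard : Tc.card = n - m + 1 := by
      rw [hTcdef, Finset.card_sdiff_of_subset (Finset.subset_univ _), hTcard]
      simp; omega
    have htopTc : top ∈ Tc := by
      rw [hTcdef, Finset.mem_sdiff]
      exact ⟨Finset.mem_univ _, fun h => (Finset.mem_erase.mp (hTsub h)).1 rfl⟩
    set func : Fin n → Fin n := fun p =>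
      if h : (p : ℕ) < m - 1 then T.orderEmbOfFin hTcard ⟨(p : ℕ), h⟩
      else Tc.orderEmbOfFin hTccard ⟨n - 1 - (p : ℕ), by have := p.isLt; omega⟩ with hfunc
    have hfuncT : ∀ (p : Fin n) (h : (p : ℕ) < m - 1),
        func p = T.orderEmbOfFin hTcard ⟨(p : ℕ), h⟩ := fun p h => dif_pos h
    have hfuncC : ∀ (p : Fin n) (h : m - 1 ≤ (p : ℕ)),
        func p = Tc.orderEmbOfFin hTccard ⟨n - 1 - (p : ℕ), by have := p.isLt; omega⟩ :=
      fun p h => dif_neg (by omega)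
    have hmemT : ∀ (p : Fin n) (h : (p : ℕ) < m - 1), func p ∈ T := by
      intro p h; rw [hfuncT p h]; exact Finset.orderEmbOfFin_mem _ _ _
    have hmemC : ∀ (p : Fin n) (h : m - 1 ≤ (p : ℕ)), func p ∈ Tc := by
      intro p h; rw [hfuncC p h]; exact Finset.orderEmbOfFin_mem _ _ _
    -- claim 1 : increasing up to m-1
    have claim1 : ∀ p q : Fin n, (p : ℕ) < q → (q : ℕ) ≤ m - 1 → func p < func q := by
      intro p q hpq hq
      have hp : (p : ℕ) < m - 1 := by omega
      rcases lt_or_eq_of_le hq with hq' | hq'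
      · rw [hfuncT p hp, hfuncT q hq']
        exact (T.orderEmbOfFin hTcard).strictMono (Fin.mk_lt_mk.mpr hpq)
      · -- q is the peak position : func q = max of Tc = top
        have hfq : func q = top := by
          rw [hfuncC q (by omega)]
          have he : (⟨n - 1 - (q : ℕ), by have := q.isLt; omega⟩ : Fin (n - m + 1)) =
              ⟨n - m + 1 - 1, by omega⟩ := Fin.ext (by simp; omega)
          rw [he, Finset.orderEmbOfFin_last hTccard (by omega)]
          refine le_antisymm (le_top _) (Finset.le_max' _ _ htopTc)
        rw [hfq]
        have hmem := hmemT p hp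
        have hne : func p ≠ top := (Finset.mem_erase.mp (hTsub hmem)).1
        exact lt_of_le_of_ne (le_top _) hne
    have claim2 : ∀ p q : Fin n, m - 1 ≤ (p : ℕ) → (p : ℕ) < q → func q < func p := by
      intro p q hp hpq
      rw [hfuncC p hp, hfuncC q (by omega)]
      refine (Tc.orderEmbOfFin hTccard).strictMono ?_
      have := q.isLt
      exact Fin.mk_lt_mk.mpr (by omega)
    have hinj : Function.Injective func := by
      intro p q hpq
      by_contra hne
      have hne' : (p : ℕ) ≠ (q : ℕ) := fun h => hne (Fin.ext h)
      rcases lt_or_gt_of_ne hne' with h | h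
      · rcases le_or_gt (m - 1) (p : ℕ) with h2 | h2
        · exact absurd hpq (ne_of_gt (claim2 p q h2 h))
        · rcases le_or_gt ((q : ℕ)) (m - 1) with h3 | h3
          · exact absurd hpq (ne_of_lt (claim1 p q h h3))
          · have := hmemT p h2
            have h4 := hmemC q (by omega)
            rw [hTcdef, Finset.mem_sdiff] at h4
            rw [hpq] at this
            exact h4.2 this
      · rcases le_or_gt (m - 1) (q : ℕ) with h2 | h2
        · exact absurd hpq (ne_of_lt (claim2 q p h2 h))
        · rcases le_or_gt ((p : ℕ)) (m - 1) with h3 | h3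
          · exact absurd hpq (ne_of_gt (claim1 q p h h3))
          · have := hmemT q h2
            have h4 := hmemC p (by omega)
            rw [hTcdef, Finset.mem_sdiff] at h4
            rw [← hpq] at this
            exact h4.2 this
    let π : Equiv.Perm (Fin n) := Equiv.ofBijective func (Finite.injective_iff_bijective.mp hinj)
    have hπf : ∀ p, π p = func p := fun p => rfl
    have hπuni : Uni m n π := by
      constructor
      · intro j hj hjm
        rw [pval_lt_iff' π (by omega) (by omega) (by omega) (by omega), hπf, hπf]
        exact claim1 _ _ (by simp; omega) (by simp; omega)
      · intro j hj hjn
        rw [pval_lt_iff' π (by omega) (by omega) (by omega) (by omega), hπf, hπf]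
        exact claim2 ⟨j - 1, by omega⟩ ⟨j + 1 - 1, by omega⟩ (by simp; omega) (by simp; omega)
    refine ⟨π, (mem_pvPerms_iff_uni π hm hn).mpr hπuni, ?_⟩
    apply Finset.eq_of_subset_of_card_le
    · intro v hv
      rw [Finset.mem_image] at hv
      obtain ⟨j, -, rfl⟩ := hv
      rw [hπf, hfuncT _ (by simpa using j.isLt)]
      exact Finset.orderEmbOfFin_mem _ _ _
    · rw [hTcard, Finset.card_image_of_injective _
        (fun a b hab => Fin.castLE_injective hcastle (π.injective hab))]
      simp
end

section
/- For integers m, n with 3 ≤ m ≤ n−1, the number of permutations π of [n] whose combined set of peaks and valleys is exactly {2, m}, with 2 a peak (and hence m a valley), equals C(n−2, m−2) + (m−2)·C(n−1, m−1), where C(a,b) denotes the binomial coefficient; that is, #PV(2,m;n) = C(n−2, m−2) + (m−2)·C(n−1, m−1). -/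
namespace Stmt17

/-- 0-indexed word value. -/
def wv (n : ℕ) (π : Equiv.Perm (Fin n)) (i : ℕ) : ℕ := pval n π (i + 1)

lemma wv_eq {n : ℕ} (π : Equiv.Perm (Fin n)) {i : ℕ} (h : i < n) :
    wv n π i = (π ⟨i, h⟩ : ℕ) + 1 := by
  simp only [wv, pval, Nat.add_sub_cancel, dif_pos h]

lemma wv_lt_iff {n : ℕ} (π : Equiv.Perm (Fin n)) {i j : ℕ} (hi : i < n) (hj : j < n) :
    wv n π i < wv n π j ↔ π ⟨i, hi⟩ < π ⟨j, hj⟩ := by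
  rw [wv_eq π hi, wv_eq π hj, Fin.lt_def]
  omega

lemma wv_ne {n : ℕ} (π : Equiv.Perm (Fin n)) {i j : ℕ} (hi : i < n) (hj : j < n)
    (hij : i ≠ j) : wv n π i ≠ wv n π j := by
  rw [wv_eq π hi, wv_eq π hj]
  intro h
  have := π.injective (Fin.val_injective (by omega : ((π ⟨i, hi⟩ : Fin n) : ℕ) = π ⟨j, hj⟩))
  exact hij (by simpa [Fin.ext_iff] using this)

lemma pval_eq_wv {n : ℕ} (π : Equiv.Perm (Fin n)) {i : ℕ} (h : 1 ≤ i) :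
    pval n π i = wv n π (i - 1) := by
  rw [wv, Nat.sub_add_cancel h]

lemma mem_peakSet {n : ℕ} (π : Equiv.Perm (Fin n)) (j : ℕ) :
    j + 2 ∈ peakSet n π ↔
      j + 3 ≤ n ∧ wv n π j < wv n π (j + 1) ∧ wv n π (j + 2) < wv n π (j + 1) := by
  have e1 : pval n π (j + 2 - 1) = wv n π j := by norm_num [wv]
  have e2 : pval n π (j + 2) = wv n π (j + 1) := rfl
  have e3 : pval n π (j + 2 + 1) = wv n π (j + 2) := rfl
  simp only [peakSet, Finset.mem_filter, Finset.mem_range, e1, e2, e3]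
  constructor
  · rintro ⟨h1, -, -, h4, h5⟩; exact ⟨by omega, h4, h5⟩
  · rintro ⟨h1, h2, h3⟩; exact ⟨by omega, by omega, by omega, h2, h3⟩

lemma mem_valleySet {n : ℕ} (π : Equiv.Perm (Fin n)) (j : ℕ) :
    j + 2 ∈ valleySet n π ↔
      j + 3 ≤ n ∧ wv n π (j + 1) < wv n π j ∧ wv n π (j + 1) < wv n π (j + 2) := by
  have e1 : pval n π (j + 2 - 1) = wv n π j := by norm_num [wv]
  have e2 : pval n π (j + 2) = wv n π (j + 1) := rfl
  have e3 : pval n π (j + 2 + 1) = wv n π (j + 2) := rfl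
  simp only [valleySet, Finset.mem_filter, Finset.mem_range, e1, e2, e3]
  constructor
  · rintro ⟨h1, -, -, h4, h5⟩; exact ⟨by omega, h4, h5⟩
  · rintro ⟨h1, h2, h3⟩; exact ⟨by omega, by omega, by omega, h2, h3⟩

lemma two_le_of_mem_peakSet {n : ℕ} {π : Equiv.Perm (Fin n)} {i : ℕ}
    (h : i ∈ peakSet n π) : 2 ≤ i := (Finset.mem_filter.mp h).2.1

lemma two_le_of_mem_valleySet {n : ℕ} {π : Equiv.Perm (Fin n)} {i : ℕ}
    (h : i ∈ valleySet n π) : 2 ≤ i := (Finset.mem_filter.mp h).2.1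

/-- The shape: up, then down until position m, then up. (0-indexed word `wv`.) -/
def Shape (m n : ℕ) (π : Equiv.Perm (Fin n)) : Prop :=
  wv n π 0 < wv n π 1 ∧
  (∀ i, 1 ≤ i → i + 1 < m → wv n π (i + 1) < wv n π i) ∧
  (∀ i, m ≤ i + 1 → i + 1 < n → wv n π i < wv n π (i + 1))

lemma mem_pvPerms_iff {m n : ℕ} (hm : 3 ≤ m) (hmn : m + 1 ≤ n) (π : Equiv.Perm (Fin n)) :
    π ∈ pvPerms ({2, m} : Finset ℕ) n ↔ Shape m n π := by
  rw [pvPerms, Finset.mem_filter]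
  simp only [Finset.mem_univ, true_and]
  constructor
  · rintro ⟨hpv, hmin⟩
    -- 2 is a peak
    have h2 : (2 : ℕ) ∈ peakSet n π := by
      refine hmin 2 (by simp) ?_
      intro j hj
      simp only [Finset.mem_insert, Finset.mem_singleton] at hj
      omega
    rw [show (2:ℕ) = 0 + 2 by rfl, mem_peakSet] at h2
    obtain ⟨hn3, h01, h21⟩ := h2
    have hnotpv : ∀ i, i ≠ 2 → i ≠ m → i ∉ peakSet n π ∧ i ∉ valleySet n π := by
      intro i hi2 him
      constructor
      · intro h
        have : i ∈ ({2, m} : Finset ℕ) := by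
          rw [← hpv]; exact Finset.mem_union_left _ h
        simp only [Finset.mem_insert, Finset.mem_singleton] at this; omega
      · intro h
        have : i ∈ ({2, m} : Finset ℕ) := by
          rw [← hpv]; exact Finset.mem_union_right _ h
        simp only [Finset.mem_insert, Finset.mem_singleton] at this; omega
    -- descending part
    have hdec : ∀ i, 1 ≤ i → i + 1 < m → wv n π (i + 1) < wv n π i := by
      intro i
      induction i using Nat.strong_induction_on with
      | _ i IH =>
        intro hi1 him
        rcases Nat.lt_or_ge i 2 with hi | hi
        · interval_cases i
          exact h21
        · -- i ≥ 2 : position i+1 = (i-1)+2 is not a valley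
          have hprev : wv n π i < wv n π (i - 1) := by
            have := IH (i - 1) (by omega) (by omega) (by omega)
            rwa [show i - 1 + 1 = i by omega] at this
          have hnv := (hnotpv (i + 1) (by omega) (by omega)).2
          rw [show i + 1 = (i - 1) + 2 by omega, mem_valleySet] at hnv
          rw [show i - 1 + 1 = i by omega, show i - 1 + 2 = i + 1 by omega] at hnv
          push_neg at hnv
          have hle := hnv (by omega) hprev
          have hne := wv_ne π (by omega : i + 1 < n) (by omega : i < n) (by omega)
          omega
    -- m is a valley
    have hmv : m ∈ valleySet n π := by
      have hmem : m ∈ pvSet n π := by rw [hpv]; simp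
      rcases Finset.mem_union.mp hmem with h | h
      · exfalso
        rw [show m = (m - 2) + 2 by omega, mem_peakSet] at h
        rw [show m - 2 + 1 = m - 1 by omega, show m - 2 + 2 = m by omega] at h
        have := hdec (m - 2) (by omega) (by omega)
        rw [show m - 2 + 1 = m - 1 by omega] at this
        -- h.2.1 : wv (m-2) < wv (m-1), this : wv (m-1) < wv (m-2)
        omega
      · exact h
    rw [show m = (m - 2) + 2 by omega, mem_valleySet] at hmv
    rw [show m - 2 + 1 = m - 1 by omega, show m - 2 + 2 = m by omega] at hmv
    have hvalley : wv n π (m - 1) < wv n π m := hmv.2.2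
    -- ascending part
    have hinc : ∀ i, m ≤ i + 1 → i + 1 < n → wv n π i < wv n π (i + 1) := by
      intro i
      induction i using Nat.strong_induction_on with
      | _ i IH =>
        intro hi1 hin
        rcases Nat.lt_or_ge i m with hi | hi
        · have : i = m - 1 := by omega
          subst this
          rwa [show m - 1 + 1 = m by omega]
        · have hprev : wv n π (i - 1) < wv n π i := by
            have := IH (i - 1) (by omega) (by omega) (by omega)
            rwa [show i - 1 + 1 = i by omega] at this
          have hnp := (hnotpv (i + 1) (by omega) (by omega)).1
          rw [show i + 1 = (i - 1) + 2 by omega, mem_peakSet] at hnp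
          rw [show i - 1 + 1 = i by omega, show i - 1 + 2 = i + 1 by omega] at hnp
          push_neg at hnp
          have hle := hnp (by omega) hprev
          have hne := wv_ne π (by omega : i + 1 < n) (by omega : i < n) (by omega)
          omega
    exact ⟨h01, hdec, hinc⟩
  · rintro ⟨h01, hdec, hinc⟩
    have h2peak : (2 : ℕ) ∈ peakSet n π := by
      rw [show (2:ℕ) = 0 + 2 by rfl, mem_peakSet]
      exact ⟨by omega, h01, hdec 1 le_rfl (by omega)⟩
    have hmval : m ∈ valleySet n π := by
      rw [show m = (m - 2) + 2 by omega, mem_valleySet]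
      rw [show m - 2 + 1 = m - 1 by omega, show m - 2 + 2 = m by omega]
      refine ⟨by omega, ?_, ?_⟩
      · have := hdec (m - 2) (by omega) (by omega)
        rwa [show m - 2 + 1 = m - 1 by omega] at this
      · have := hinc (m - 1) (by omega) (by omega)
        rwa [show m - 1 + 1 = m by omega] at this
    have hpeak : peakSet n π = {2} := by
      ext i
      simp only [Finset.mem_singleton]
      constructor
      · intro h
        have h2 := two_le_of_mem_peakSet h
        obtain ⟨j, rfl⟩ : ∃ j, i = j + 2 := ⟨i - 2, by omega⟩
        rw [mem_peakSet] at h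
        obtain ⟨hn, ha, hb⟩ := h
        by_contra hne
        rcases Nat.lt_or_ge (j + 2) m with hc | hc
        · have := hdec j (by omega) (by omega)
          omega
        · have := hinc (j + 1) (by omega) (by omega)
          rw [show j + 1 + 1 = j + 2 by rfl] at this
          omega
      · rintro rfl; exact h2peak
    have hvalley : valleySet n π = {m} := by
      ext i
      simp only [Finset.mem_singleton]
      constructor
      · intro h
        have h2 := two_le_of_mem_valleySet h
        obtain ⟨j, rfl⟩ : ∃ j, i = j + 2 := ⟨i - 2, by omega⟩
        rw [mem_valleySet] at h
        obtain ⟨hn, ha, hb⟩ := h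
        by_contra hne
        rcases Nat.lt_or_ge (j + 2) m with hc | hc
        · have := hdec (j + 1) (by omega) (by omega)
          rw [show j + 1 + 1 = j + 2 by rfl] at this
          omega
        · have := hinc j (by omega) (by omega)
          omega
      · rintro rfl; exact hmval
    constructor
    · rw [pvSet, hpeak, hvalley]
      ext i; simp [Finset.mem_insert]
    · intro i hi hle
      simp only [Finset.mem_insert, Finset.mem_singleton] at hi
      rcases hi with rfl | rfl
      · exact h2peak
      · have := hle 2 (by simp); omega



lemma chain_dec {m n : ℕ} {π : Equiv.Perm (Fin n)} (h : Shape m n π) (hmn : m + 1 ≤ n) :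
    ∀ q p, 1 ≤ p → p < q → q < m → wv n π q < wv n π p := by
  intro q
  induction q using Nat.strong_induction_on with
  | _ q IH =>
    intro p h1 h2 h3
    have hq : wv n π q < wv n π (q - 1) := by
      have := h.2.1 (q - 1) (by omega) (by omega)
      rwa [show q - 1 + 1 = q by omega] at this
    rcases Nat.lt_or_ge p (q - 1) with hp | hp
    · exact hq.trans (IH (q - 1) (by omega) p h1 hp (by omega))
    · have : p = q - 1 := by omega
      subst this; exact hq

lemma chain_inc {m n : ℕ} {π : Equiv.Perm (Fin n)} (h : Shape m n π) (hm : 3 ≤ m) :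
    ∀ q p, m - 1 ≤ p → p < q → q < n → wv n π p < wv n π q := by
  intro q
  induction q using Nat.strong_induction_on with
  | _ q IH =>
    intro p h1 h2 h3
    have hq : wv n π (q - 1) < wv n π q := by
      have := h.2.2 (q - 1) (by omega) (by omega)
      rwa [show q - 1 + 1 = q by omega] at this
    rcases Nat.lt_or_ge p (q - 1) with hp | hp
    · exact (IH (q - 1) (by omega) p h1 hp (by omega)).trans hq
    · have : p = q - 1 := by omega
      subst this; exact hq

/-- The positions `0, …, m-1`. -/
def F (m n : ℕ) : Finset (Fin n) := Finset.univ.filter fun i => (i : ℕ) < m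

lemma mem_F {m n : ℕ} {i : Fin n} : i ∈ F m n ↔ (i : ℕ) < m := by
  simp [F]

lemma card_F {m n : ℕ} (h : m ≤ n) : (F m n).card = m := by
  have : F m n = Finset.map ⟨Fin.castLE h, Fin.castLE_injective h⟩ Finset.univ := by
    ext j
    simp only [mem_F, Finset.mem_map, Finset.mem_univ, true_and, Function.Embedding.coeFn_mk]
    constructor
    · intro hj; exact ⟨⟨(j : ℕ), hj⟩, rfl⟩
    · rintro ⟨i, rfl⟩; exact i.2
  rw [this, Finset.card_map, Finset.card_univ, Fintype.card_fin]

/-- Parametrizing pairs: `(a₁, {a₁,…,a_m})`. -/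
def PSet (m n : ℕ) : Finset (Fin n × Finset (Fin n)) :=
  Finset.univ.filter fun p =>
    p.2.card = m ∧ p.1 ∈ p.2 ∧ (∃ y ∈ p.2, p.1 < y) ∧
      ∀ z, z ∉ p.2 → ∃ y ∈ p.2, y ≠ p.1 ∧ y < z

lemma mem_PSet {m n : ℕ} {p : Fin n × Finset (Fin n)} :
    p ∈ PSet m n ↔ p.2.card = m ∧ p.1 ∈ p.2 ∧ (∃ y ∈ p.2, p.1 < y) ∧
      ∀ z, z ∉ p.2 → ∃ y ∈ p.2, y ≠ p.1 ∧ y < z := by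
  simp [PSet]



lemma oEF_congr {α : Type*} [LinearOrder α] {s t : Finset α} {k : ℕ} (hst : s = t)
    (hs : s.card = k) (ht : t.card = k) :
    ⇑(s.orderEmbOfFin hs) = ⇑(t.orderEmbOfFin ht) := by subst hst; rfl

lemma card_eq {m n : ℕ} (hm : 3 ≤ m) (hmn : m + 1 ≤ n) :
    (pvPerms ({2, m} : Finset ℕ) n).card = (PSet m n).card := by
  have h0n : 0 < n := by omega
  refine Finset.card_bij
    (fun π _ => ((π ⟨0, h0n⟩ : Fin n), (F m n).image π)) ?_ ?_ ?_
  -- maps into PSet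
  · intro π hπ
    rw [mem_pvPerms_iff hm hmn] at hπ
    obtain ⟨h01, hdec, hinc⟩ := hπ
    rw [mem_PSet]
    refine ⟨?_, ?_, ?_, ?_⟩
    · rw [Finset.card_image_of_injective _ π.injective, card_F (by first | omega | (dsimp only; omega))]
    · exact Finset.mem_image.mpr ⟨⟨0, h0n⟩, mem_F.mpr (by first | omega | (dsimp only; omega)), rfl⟩
    · refine ⟨π ⟨1, by omega⟩,
        Finset.mem_image.mpr ⟨⟨1, by omega⟩, mem_F.mpr (by first | omega | (dsimp only; omega)), rfl⟩, ?_⟩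
      exact (wv_lt_iff π h0n (by first | omega | (dsimp only; omega))).mp h01
    · intro z hz
      refine ⟨π ⟨m - 1, by omega⟩,
        Finset.mem_image.mpr ⟨⟨m - 1, by omega⟩, mem_F.mpr (by first | omega | (dsimp only; omega)), rfl⟩, ?_, ?_⟩
      · intro hcon
        have := π.injective hcon
        rw [Fin.mk.injEq] at this
        omega
      · have hz' : m ≤ ((π.symm z : Fin n) : ℕ) := by
          by_contra hcon
          exact hz (Finset.mem_image.mpr ⟨π.symm z, mem_F.mpr (by first | omega | (dsimp only; omega)),
            π.apply_symm_apply z⟩)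
        have hlt := chain_inc ⟨h01, hdec, hinc⟩ hm ((π.symm z : Fin n) : ℕ) (m - 1)
          le_rfl (by first | omega | (dsimp only; omega)) (π.symm z).2
        rw [wv_lt_iff π (by first | omega | (dsimp only; omega)) (π.symm z).2] at hlt
        rwa [Fin.eta, π.apply_symm_apply z] at hlt
  -- injectivity
  · intro π hπ σ hσ heq
    rw [mem_pvPerms_iff hm hmn] at hπ hσ
    rw [Prod.mk.injEq] at heq
    obtain ⟨h0eq, himg⟩ := heq
    apply Equiv.ext
    intro x
    rcases Nat.lt_or_ge (x : ℕ) 1 with hx | hx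
    · have hx0 : x = ⟨0, h0n⟩ := Fin.ext (by first | omega | (dsimp only; omega))
      rw [hx0]; exact h0eq
    rcases Nat.lt_or_ge (x : ℕ) m with hxm | hxm
    · -- middle positions, via decreasing run
      have hAcard : (((F m n).image π).erase (π ⟨0, h0n⟩)).card = m - 1 := by
        rw [Finset.card_erase_of_mem
          (Finset.mem_image.mpr ⟨⟨0, h0n⟩, mem_F.mpr (by first | omega | (dsimp only; omega)), rfl⟩),
          Finset.card_image_of_injective _ π.injective, card_F (by first | omega | (dsimp only; omega))]
      have key : ∀ (τ : Equiv.Perm (Fin n)), Shape m n τ →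
          ∀ (hc : (((F m n).image τ).erase (τ ⟨0, h0n⟩)).card = m - 1),
          (fun j : Fin (m - 1) => τ ⟨m - 1 - (j : ℕ), by omega⟩) =
            ((((F m n).image τ).erase (τ ⟨0, h0n⟩)).orderEmbOfFin hc : Fin (m-1) → Fin n) := by
        intro τ hτ hc
        apply Finset.orderEmbOfFin_unique
        · intro j
          have hj2 := j.2
          refine Finset.mem_erase.mpr ⟨?_,
            Finset.mem_image.mpr ⟨_, mem_F.mpr (by first | omega | (dsimp only; omega)), rfl⟩⟩
          intro hcon
          have := τ.injective hcon
          rw [Fin.mk.injEq] at this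
          omega
        · intro j j' hjj'
          have hj2 := j.2; have hj'2 := j'.2
          have hjj : (j : ℕ) < (j' : ℕ) := hjj'
          have := chain_dec hτ hmn (m - 1 - (j : ℕ)) (m - 1 - (j' : ℕ))
            (by first | omega | (dsimp only; omega)) (by first | omega | (dsimp only; omega)) (by first | omega | (dsimp only; omega))
          rwa [wv_lt_iff τ (by first | omega | (dsimp only; omega)) (by first | omega | (dsimp only; omega))] at this
      have hAσ : ((F m n).image σ).erase (σ ⟨0, h0n⟩) =
          ((F m n).image π).erase (π ⟨0, h0n⟩) := by rw [himg, h0eq]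
      have hcσ : (((F m n).image σ).erase (σ ⟨0, h0n⟩)).card = m - 1 := by
        rw [hAσ]; exact hAcard
      have heq2 : (fun j : Fin (m - 1) => π ⟨m - 1 - (j : ℕ), by omega⟩) =
          (fun j : Fin (m - 1) => σ ⟨m - 1 - (j : ℕ), by omega⟩) := by
        rw [key π hπ hAcard, key σ hσ hcσ, oEF_congr hAσ hcσ hAcard]
      have := congrFun heq2 ⟨m - 1 - (x : ℕ), by omega⟩
      dsimp only at this
      have hidx : (⟨m - 1 - (m - 1 - (x : ℕ)), by omega⟩ : Fin n) = x :=
        Fin.ext (by first | omega | (dsimp only; omega))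
      rwa [hidx] at this

    · -- tail positions, via increasing run
      have hBcard : (((F m n).image π)ᶜ).card = n - m := by
        rw [Finset.card_compl, Finset.card_image_of_injective _ π.injective,
          card_F (by first | omega | (dsimp only; omega)), Fintype.card_fin]
      have key : ∀ (τ : Equiv.Perm (Fin n)), Shape m n τ →
          ∀ (hc : (((F m n).image τ)ᶜ).card = n - m),
          (fun j : Fin (n - m) => τ ⟨m + (j : ℕ), by have := j.2; omega⟩) =
            ((((F m n).image τ)ᶜ).orderEmbOfFin hc : Fin (n-m) → Fin n) := by
        intro τ hτ hc
        apply Finset.orderEmbOfFin_unique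
        · intro j
          have hj2 := j.2
          rw [Finset.mem_compl]
          intro hcon
          obtain ⟨i, hiF, hieq⟩ := Finset.mem_image.mp hcon
          have := τ.injective hieq
          rw [mem_F] at hiF
          rw [this] at hiF
          dsimp only at hiF
          omega
        · intro j j' hjj'
          have hj2 := j.2; have hj'2 := j'.2
          have hjj : (j : ℕ) < (j' : ℕ) := hjj'
          have := chain_inc hτ hm (m + (j' : ℕ)) (m + (j : ℕ))
            (by first | omega | (dsimp only; omega)) (by first | omega | (dsimp only; omega)) (by first | omega | (dsimp only; omega))
          rwa [wv_lt_iff τ (by first | omega | (dsimp only; omega)) (by first | omega | (dsimp only; omega))] at this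
      have hcσ : (((F m n).image σ)ᶜ).card = n - m := by
        rw [← himg]; exact hBcard
      have hσπ : ((F m n).image σ)ᶜ = ((F m n).image π)ᶜ := by rw [himg]
      have heq2 : (fun j : Fin (n - m) => π ⟨m + (j : ℕ), by have := j.2; omega⟩) =
          (fun j : Fin (n - m) => σ ⟨m + (j : ℕ), by have := j.2; omega⟩) := by
        rw [key π hπ hBcard, key σ hσ hcσ, oEF_congr hσπ hcσ hBcard]
      have := congrFun heq2 ⟨(x : ℕ) - m, by have := x.2; omega⟩
      dsimp only at this
      have hidx : (⟨m + ((x : ℕ) - m), by have := x.2; omega⟩ : Fin n) = x :=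
        Fin.ext (by first | omega | (dsimp only; omega))
      rwa [hidx] at this
  -- surjectivity
  · rintro ⟨x, U⟩ hb
    rw [mem_PSet] at hb
    obtain ⟨hU, hxU, hex, hall⟩ := hb
    have h1 : (U.erase x).card = m - 1 := by rw [Finset.card_erase_of_mem hxU, hU]
    have h2 : (Uᶜ).card = n - m := by rw [Finset.card_compl, Fintype.card_fin, hU]
    set d := (U.erase x).orderEmbOfFin h1 with hd
    set e := (Uᶜ).orderEmbOfFin h2 with he
    set w : Fin n → Fin n := fun i =>
      if h0 : (i : ℕ) = 0 then x
      else if hm' : (i : ℕ) < m then d ⟨m - 1 - (i : ℕ), by omega⟩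
      else e ⟨(i : ℕ) - m, by have := i.2; omega⟩ with hw
    have dmem : ∀ k, d k ∈ U.erase x := fun k => Finset.orderEmbOfFin_mem _ h1 k
    have emem : ∀ k, e k ∉ U := fun k => Finset.mem_compl.mp (Finset.orderEmbOfFin_mem _ h2 k)
    have hw0 : ∀ (h : (0:ℕ) < n), w ⟨0, h⟩ = x := fun h => rfl
    have hwd : ∀ (i : ℕ) (h : i < n) (hi0 : i ≠ 0) (him : i < m),
        w ⟨i, h⟩ = d ⟨m - 1 - i, by omega⟩ := by
      intro i h hi0 him
      rw [hw]
      dsimp only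
      rw [dif_neg hi0, dif_pos him]
    have hwe : ∀ (i : ℕ) (h : i < n) (him : m ≤ i),
        w ⟨i, h⟩ = e ⟨i - m, by omega⟩ := by
      intro i h him
      rw [hw]
      dsimp only
      rw [dif_neg (by omega : ¬ i = 0), dif_neg (by omega : ¬ i < m)]
    have hwinj : Function.Injective w := by
      rintro ⟨iv, hiv⟩ ⟨jv, hjv⟩ hij
      rcases Nat.eq_zero_or_pos iv with hi0 | hi0 <;>
        rcases Nat.eq_zero_or_pos jv with hj0 | hj0
      · exact Fin.ext (by first | omega | (dsimp only; omega))
      · exfalso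
        subst hi0
        rw [hw0] at hij
        rcases Nat.lt_or_ge jv m with hjm | hjm
        · rw [hwd jv hjv (by first | omega | (dsimp only; omega)) hjm] at hij
          exact (Finset.ne_of_mem_erase (dmem _)) hij.symm
        · rw [hwe jv hjv hjm] at hij
          exact emem _ (hij ▸ hxU)
      · exfalso
        subst hj0
        rw [hw0] at hij
        rcases Nat.lt_or_ge iv m with him | him
        · rw [hwd iv hiv (by first | omega | (dsimp only; omega)) him] at hij
          exact (Finset.ne_of_mem_erase (dmem _)) hij
        · rw [hwe iv hiv him] at hij
          exact emem _ (hij ▸ hxU)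
      · rcases Nat.lt_or_ge iv m with him | him <;>
          rcases Nat.lt_or_ge jv m with hjm | hjm
        · rw [hwd iv hiv (by first | omega | (dsimp only; omega)) him, hwd jv hjv (by first | omega | (dsimp only; omega)) hjm] at hij
          have := congrArg Fin.val (d.injective hij)
          dsimp only at this
          exact Fin.ext (by first | omega | (dsimp only; omega))
        · exfalso
          rw [hwd iv hiv (by first | omega | (dsimp only; omega)) him, hwe jv hjv hjm] at hij
          exact emem _ (hij ▸ Finset.mem_of_mem_erase (dmem _))
        · exfalso
          rw [hwe iv hiv him, hwd jv hjv (by first | omega | (dsimp only; omega)) hjm] at hij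
          exact emem _ (hij.symm ▸ Finset.mem_of_mem_erase (dmem _))
        · rw [hwe iv hiv him, hwe jv hjv hjm] at hij
          have := congrArg Fin.val (e.injective hij)
          dsimp only at this
          exact Fin.ext (by first | omega | (dsimp only; omega))
    have hwbij : Function.Bijective w := Finite.injective_iff_bijective.mp hwinj
    set π : Equiv.Perm (Fin n) := Equiv.ofBijective w hwbij with hπdef
    have hπa : ∀ (i : ℕ) (h : i < n), π ⟨i, h⟩ = w ⟨i, h⟩ := fun _ _ => rfl
    have hdlt : ∀ (z : Fin n), z ∉ U → d ⟨0, by omega⟩ < z := by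
      intro z hzU
      obtain ⟨y, hyU, hyx, hylt⟩ := hall z hzU
      have hyr : y ∈ Set.range d := by
        rw [hd, Finset.range_orderEmbOfFin]
        exact Finset.mem_coe.mpr (Finset.mem_erase.mpr ⟨hyx, hyU⟩)
      obtain ⟨k, rfl⟩ := hyr
      refine lt_of_le_of_lt (d.monotone ?_) hylt
      rw [Fin.le_def]
      dsimp only
      omega
    have hshape : Shape m n π := by
      refine ⟨?_, ?_, ?_⟩
      · rw [wv_lt_iff π h0n (by first | omega | (dsimp only; omega)), hπa, hπa, hw0, hwd 1 (by first | omega | (dsimp only; omega)) one_ne_zero (by first | omega | (dsimp only; omega))]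
        obtain ⟨y, hyU, hxy⟩ := hex
        have hyr : y ∈ Set.range d := by
          rw [hd, Finset.range_orderEmbOfFin]
          exact Finset.mem_coe.mpr (Finset.mem_erase.mpr ⟨ne_of_gt hxy, hyU⟩)
        obtain ⟨k, rfl⟩ := hyr
        have hk : k ≤ (⟨m - 1 - 1, by omega⟩ : Fin (m - 1)) := by
          rw [Fin.le_def]; dsimp only; have := k.2; omega
        exact hxy.trans_le (d.monotone hk)
      · intro i hi1 him
        rw [wv_lt_iff π (by first | omega | (dsimp only; omega)) (by first | omega | (dsimp only; omega)), hπa, hπa,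
          hwd (i+1) (by first | omega | (dsimp only; omega)) (by first | omega | (dsimp only; omega)) him, hwd i (by first | omega | (dsimp only; omega)) (by first | omega | (dsimp only; omega)) (by first | omega | (dsimp only; omega))]
        exact d.strictMono (Fin.mk_lt_mk.mpr (by first | omega | (dsimp only; omega)))
      · intro i hmi hin
        rcases Nat.lt_or_ge i m with him | him
        · -- i = m - 1
          rw [wv_lt_iff π (by first | omega | (dsimp only; omega)) (by first | omega | (dsimp only; omega)), hπa, hπa,
            hwd i (by first | omega | (dsimp only; omega)) (by first | omega | (dsimp only; omega)) him, hwe (i+1) (by first | omega | (dsimp only; omega)) (by first | omega | (dsimp only; omega))]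
          have hidx : (⟨m - 1 - i, by omega⟩ : Fin (m - 1)) = ⟨0, by omega⟩ :=
            Fin.ext (by dsimp only; omega)
          rw [hidx]
          exact hdlt _ (emem _)
        · rw [wv_lt_iff π (by first | omega | (dsimp only; omega)) (by first | omega | (dsimp only; omega)), hπa, hπa,
            hwe i (by first | omega | (dsimp only; omega)) him, hwe (i+1) (by first | omega | (dsimp only; omega)) (by first | omega | (dsimp only; omega))]
          exact e.strictMono (Fin.mk_lt_mk.mpr (by first | omega | (dsimp only; omega)))
    refine ⟨π, (mem_pvPerms_iff hm hmn π).mpr hshape, ?_⟩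
    rw [Prod.mk.injEq]
    constructor
    · rw [hπa, hw0]
    · have hsub : (F m n).image π ⊆ U := by
        intro z hz'
        obtain ⟨i, hiF, rfl⟩ := Finset.mem_image.mp hz'
        rw [mem_F] at hiF
        rcases Nat.eq_zero_or_pos (i : ℕ) with h0 | h0
        · have : i = ⟨0, h0n⟩ := Fin.ext h0
          rw [this, hπa, hw0]
          exact hxU
        · have : i = ⟨(i : ℕ), i.2⟩ := Fin.ext rfl
          rw [this, hπa, hwd (i : ℕ) i.2 (by first | omega | (dsimp only; omega)) hiF]
          exact Finset.mem_of_mem_erase (dmem _)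
      exact Finset.eq_of_subset_of_card_le hsub (by
        rw [hU, Finset.card_image_of_injective _ π.injective, card_F (by first | omega | (dsimp only; omega))])


lemma val_mk {n a : ℕ} (h : a < n) : ((⟨a, h⟩ : Fin n) : ℕ) = a := rfl

lemma card_PSet {m n : ℕ} (hm : 3 ≤ m) (hmn : m + 1 ≤ n) :
    (PSet m n).card = (n - 2).choose (m - 2) + (m - 2) * (n - 1).choose (m - 1) := by
  have h0n : 0 < n := by omega
  have h1n : 1 < n := by omega
  set z0 : Fin n := ⟨0, h0n⟩ with hz0def
  set z1 : Fin n := ⟨1, h1n⟩ with hz1def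
  have hz01 : z0 ≠ z1 := by rw [hz0def, hz1def, Ne, Fin.mk.injEq]; omega
  rw [← Finset.card_filter_add_card_filter_not (s := PSet m n)
    (p := fun p => p.1 = z0)]
  congr 1
  -- Case a₁ = 1 (i.e. x = z0): count is C(n-2, m-2)
  · have hT : ((Finset.univ.erase z0).erase z1 : Finset (Fin n)).card = n - 2 := by
      rw [Finset.card_erase_of_mem (Finset.mem_erase.mpr ⟨hz01.symm, Finset.mem_univ _⟩),
        Finset.card_erase_of_mem (Finset.mem_univ _), Finset.card_univ, Fintype.card_fin]
      omega
    have hbij : (((Finset.univ.erase z0).erase z1).powersetCard (m - 2)).card =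
        ((PSet m n).filter fun p => p.1 = z0).card := by
      refine Finset.card_bij (fun V _ => (z0, insert z0 (insert z1 V))) ?_ ?_ ?_
      · intro V hV
        rw [Finset.mem_powersetCard] at hV
        obtain ⟨hVsub, hVcard⟩ := hV
        have hV0 : z0 ∉ V := fun h =>
          (Finset.mem_erase.mp (Finset.mem_erase.mp (hVsub h)).2).1 rfl
        have hV1 : z1 ∉ V := fun h => (Finset.mem_erase.mp (hVsub h)).1 rfl
        rw [Finset.mem_filter, mem_PSet]
        refine ⟨⟨?_, ?_, ?_, ?_⟩, rfl⟩
        · rw [Finset.card_insert_of_notMem (by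
            simp only [Finset.mem_insert]
            rintro (h | h)
            exacts [hz01 h, hV0 h]),
            Finset.card_insert_of_notMem hV1, hVcard]
          omega
        · exact Finset.mem_insert_self _ _
        · refine ⟨z1, by simp [Finset.mem_insert], ?_⟩
          show z0 < z1
          exact Fin.mk_lt_mk.mpr (by omega)
        · intro z hz
          simp only [Finset.mem_insert, not_or] at hz
          refine ⟨z1, by simp [Finset.mem_insert], hz01.symm, ?_⟩
          show z1 < z
          have h1 : z ≠ z0 := hz.1
          have h2 : z ≠ z1 := hz.2.1
          rw [hz0def, Ne, Fin.ext_iff] at h1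
          rw [hz1def, Ne, Fin.ext_iff] at h2
          rw [hz1def, Fin.lt_def]
          simp only [val_mk] at h1 h2 ⊢
          omega
      · intro V hV V' hV' heq
        rw [Finset.mem_powersetCard] at hV hV'
        have hV0 : z0 ∉ V := fun h =>
          (Finset.mem_erase.mp (Finset.mem_erase.mp (hV.1 h)).2).1 rfl
        have hV1 : z1 ∉ V := fun h => (Finset.mem_erase.mp (hV.1 h)).1 rfl
        have hV'0 : z0 ∉ V' := fun h =>
          (Finset.mem_erase.mp (Finset.mem_erase.mp (hV'.1 h)).2).1 rfl
        have hV'1 : z1 ∉ V' := fun h => (Finset.mem_erase.mp (hV'.1 h)).1 rfl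
        have heq2 : insert z0 (insert z1 V) = insert z0 (insert z1 V') :=
          congrArg Prod.snd heq
        ext a
        by_cases ha0 : a = z0
        · subst ha0; exact iff_of_false hV0 hV'0
        by_cases ha1 : a = z1
        · subst ha1; exact iff_of_false hV1 hV'1
        · have h := Finset.ext_iff.mp heq2 a
          simp only [Finset.mem_insert, ha0, ha1, false_or] at h
          exact h
      · rintro ⟨x, U⟩ hb
        rw [Finset.mem_filter, mem_PSet] at hb
        obtain ⟨⟨hU, hxU, hex, hall⟩, hx⟩ := hb
        dsimp only at hx hU hxU hex hall
        subst hx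
        have hz1U : z1 ∈ U := by
          by_contra hcon
          obtain ⟨y, hyU, hyne, hylt⟩ := hall z1 hcon
          rw [hz1def, Fin.lt_def] at hylt
          simp only [val_mk] at hylt
          refine hyne (Fin.ext ?_)
          rw [hz0def]
          simp only [val_mk]
          omega
        refine ⟨(U.erase z1).erase z0, ?_, ?_⟩
        · rw [Finset.mem_powersetCard]
          constructor
          · intro a ha
            rw [Finset.mem_erase] at ha
            obtain ⟨ha0, ha1⟩ := ha
            rw [Finset.mem_erase] at ha1
            exact Finset.mem_erase.mpr ⟨ha1.1, Finset.mem_erase.mpr ⟨ha0, Finset.mem_univ _⟩⟩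
          · rw [Finset.card_erase_of_mem (Finset.mem_erase.mpr ⟨hz01, hxU⟩),
              Finset.card_erase_of_mem hz1U, hU]
            omega
        · rw [Prod.mk.injEq]
          refine ⟨rfl, ?_⟩
          ext a
          simp only [Finset.mem_insert, Finset.mem_erase]
          constructor
          · rintro (rfl | rfl | ⟨_, _, haU⟩)
            exacts [hxU, hz1U, haU]
          · intro haU
            by_cases h0 : a = z0
            · exact Or.inl h0
            by_cases h1 : a = z1
            · exact Or.inr (Or.inl h1)
            · exact Or.inr (Or.inr ⟨h0, h1, haU⟩)
    rw [← hbij, Finset.card_powersetCard, hT]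
  -- Case a₁ ≠ 1: count is (m-2) * C(n-1, m-1)
  · set S : Finset (Finset (Fin n)) :=
      Finset.univ.filter (fun U : Finset (Fin n) => U.card = m ∧ z0 ∈ U) with hSdef
    have hScard : S.card = (n - 1).choose (m - 1) := by
      have hbij : ((Finset.univ.erase z0).powersetCard (m - 1)).card = S.card := by
        refine Finset.card_bij (fun V _ => insert z0 V) ?_ ?_ ?_
        · intro V hV
          rw [Finset.mem_powersetCard] at hV
          have hV0 : z0 ∉ V := fun h => (Finset.mem_erase.mp (hV.1 h)).1 rfl
          rw [hSdef, Finset.mem_filter]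
          refine ⟨Finset.mem_univ _, ?_, Finset.mem_insert_self _ _⟩
          rw [Finset.card_insert_of_notMem hV0, hV.2]
          omega
        · intro V hV V' hV' heq
          rw [Finset.mem_powersetCard] at hV hV'
          have hV0 : z0 ∉ V := fun h => (Finset.mem_erase.mp (hV.1 h)).1 rfl
          have hV'0 : z0 ∉ V' := fun h => (Finset.mem_erase.mp (hV'.1 h)).1 rfl
          rw [← Finset.erase_insert hV0, ← Finset.erase_insert hV'0, heq]
        · intro U hU
          rw [hSdef, Finset.mem_filter] at hU
          obtain ⟨-, hUcard, hz0U⟩ := hU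
          refine ⟨U.erase z0, ?_, Finset.insert_erase hz0U⟩
          rw [Finset.mem_powersetCard]
          exact ⟨fun a ha => Finset.mem_erase.mpr
            ⟨(Finset.mem_erase.mp ha).1, Finset.mem_univ _⟩,
            by rw [Finset.card_erase_of_mem hz0U, hUcard]⟩
      rw [← hbij, Finset.card_powersetCard,
        Finset.card_erase_of_mem (Finset.mem_univ _), Finset.card_univ, Fintype.card_fin]
    have hbij2 : ((PSet m n).filter fun p => ¬p.1 = z0).card =
        (S.sigma fun U => U.filter fun x => x ≠ z0 ∧ ∃ y ∈ U, x < y).card := by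
      refine Finset.card_bij (fun p _ => ⟨p.2, p.1⟩) ?_ ?_ ?_
      · rintro ⟨x, U⟩ hp
        rw [Finset.mem_filter, mem_PSet] at hp
        obtain ⟨⟨hU, hxU, hex, hall⟩, hx⟩ := hp
        dsimp only at hU hxU hex hall hx
        have hz0U : z0 ∈ U := by
          by_contra hcon
          obtain ⟨y, hyU, hyne, hylt⟩ := hall z0 hcon
          rw [hz0def, Fin.lt_def] at hylt
          simp only [val_mk] at hylt
          omega
        rw [Finset.mem_sigma]
        constructor
        · rw [hSdef, Finset.mem_filter]
          exact ⟨Finset.mem_univ _, hU, hz0U⟩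
        · rw [Finset.mem_filter]
          exact ⟨hxU, hx, hex⟩
      · rintro ⟨x, U⟩ hp ⟨x', U'⟩ hp' heq
        have h1 : U = U' := congrArg Sigma.fst heq
        subst h1
        have h2 : x = x' := by
          have := heq
          rw [Sigma.mk.inj_iff] at this
          exact eq_of_heq this.2
        rw [h2]
      · rintro ⟨U, x⟩ hq
        rw [Finset.mem_sigma, hSdef, Finset.mem_filter, Finset.mem_filter] at hq
        obtain ⟨⟨-, hU, hz0U⟩, hxU, hx0, hex⟩ := hq
        refine ⟨(x, U), ?_, rfl⟩
        rw [Finset.mem_filter, mem_PSet]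
        refine ⟨⟨hU, hxU, hex, ?_⟩, hx0⟩
        intro z hz
        refine ⟨z0, hz0U, Ne.symm hx0, ?_⟩
        have hzz0 : z ≠ z0 := fun h => hz (h ▸ hz0U)
        rw [hz0def, Ne, Fin.ext_iff] at hzz0
        rw [hz0def, Fin.lt_def]
        simp only [val_mk] at hzz0 ⊢
        omega
    rw [hbij2, Finset.card_sigma]
    have hfib : ∀ U ∈ S, (U.filter fun x => x ≠ z0 ∧ ∃ y ∈ U, x < y).card = m - 2 := by
      intro U hU
      rw [hSdef, Finset.mem_filter] at hU
      obtain ⟨-, hUcard, hz0U⟩ := hU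
      have hne : U.Nonempty := ⟨z0, hz0U⟩
      set M := U.max' hne with hMdef
      have hMmem : M ∈ U := U.max'_mem hne
      have hz0M : z0 ≠ M := by
        obtain ⟨y, hyU, hyne⟩ := Finset.exists_mem_ne (s := U) (by omega) z0
        intro h
        have hy : y ≤ M := U.le_max' y hyU
        have : z0 < y := by
          rw [Ne, Fin.ext_iff, hz0def] at hyne
          rw [hz0def, Fin.lt_def]
          simp only [val_mk] at hyne ⊢
          omega
        rw [← h] at hy
        exact absurd (lt_of_lt_of_le this hy) (lt_irrefl _)
      have hfe : (U.filter fun x => x ≠ z0 ∧ ∃ y ∈ U, x < y) = (U.erase M).erase z0 := by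
        ext a
        rw [Finset.mem_filter, Finset.mem_erase, Finset.mem_erase]
        constructor
        · rintro ⟨haU, ha0, y, hyU, hay⟩
          refine ⟨ha0, ?_, haU⟩
          intro h
          exact absurd (lt_of_lt_of_le hay (U.le_max' y hyU)) (h ▸ lt_irrefl _)
        · rintro ⟨ha0, haM, haU⟩
          exact ⟨haU, ha0, M, hMmem, lt_of_le_of_ne (U.le_max' a haU) haM⟩
      rw [hfe, Finset.card_erase_of_mem (Finset.mem_erase.mpr ⟨hz0M, hz0U⟩),
        Finset.card_erase_of_mem hMmem, hUcard]
      omega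
    rw [Finset.sum_congr rfl hfib, Finset.sum_const, smul_eq_mul, hScard, mul_comm]

end Stmt17

/-- For `3 ≤ m ≤ n-1`, `#PV(2,m;n) = C(n-2,m-2) + (m-2) C(n-1,m-1)`. -/


theorem stmt_17 (m n : ℕ) (hm : 3 ≤ m) (hmn : m ≤ n - 1) :
    (pvPerms ({2, m} : Finset ℕ) n).card =
      (n - 2).choose (m - 2) + (m - 2) * (n - 1).choose (m - 1) := by
  have hmn' : m + 1 ≤ n := by omega
  rw [Stmt17.card_eq hm hmn', Stmt17.card_PSet hm hmn']
end

section
/- For every integer n ≥ 2, the number of permutations of [n] having exactly one peak equals 2^{2n−3} − n·2^{n−2}. -/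
namespace S19

variable {n : ℕ}

def insF (m : Fin (n+1)) (σ : Equiv.Perm (Fin n)) (j : Fin (n+1)) : Fin (n+1) :=
  if h : (j : ℕ) < (m : ℕ) then (σ ⟨j, by omega⟩).castSucc
  else if h2 : (j : ℕ) = (m : ℕ) then Fin.last n
  else (σ ⟨(j : ℕ) - 1, by have := j.isLt; have := m.isLt; omega⟩).castSucc

lemma insF_inj (m : Fin (n+1)) (σ : Equiv.Perm (Fin n)) :
    Function.Injective (insF m σ) := by
  intro a b hab
  unfold insF at hab
  have hcl : ∀ x : Fin n, (x.castSucc : ℕ) ≠ (Fin.last n : ℕ) := by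
    intro x; simp; omega
  split_ifs at hab with h1 h2 h3 h4 h5 h6 h7 h8 h9 <;>
    first
    | (have := σ.injective (Fin.castSucc_injective n hab);
       have h' := congrArg Fin.val this; simp at h'; ext; omega)
    | (ext; omega)
    | (exfalso; exact hcl _ (by rw [hab]))
    | (exfalso; exact hcl _ (by rw [← hab]))

noncomputable def ins (m : Fin (n+1)) (σ : Equiv.Perm (Fin n)) : Equiv.Perm (Fin (n+1)) :=
  Equiv.ofBijective (insF m σ) ((Finite.injective_iff_bijective).mp (insF_inj m σ))

lemma ins_apply (m : Fin (n+1)) (σ : Equiv.Perm (Fin n)) (j : Fin (n+1)) :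
    ins m σ j = insF m σ j := rfl

lemma pval_le (σ : Equiv.Perm (Fin n)) (i : ℕ) : pval n σ i ≤ n := by
  unfold pval; split
  · exact (σ _).isLt
  · omega

lemma pval_pos (σ : Equiv.Perm (Fin n)) (i : ℕ) (h : i - 1 < n) : 1 ≤ pval n σ i := by
  unfold pval; rw [dif_pos h]; omega

lemma pval_ins (m : Fin (n+1)) (σ : Equiv.Perm (Fin n)) (i : ℕ)
    (h1 : 1 ≤ i) (h2 : i ≤ n + 1) :
    pval (n+1) (ins m σ) i =
      if i ≤ (m : ℕ) then pval n σ i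
      else if i = (m : ℕ) + 1 then n + 1
      else pval n σ (i - 1) := by
  have hin : i - 1 < n + 1 := by omega
  unfold pval
  rw [dif_pos hin, ins_apply]
  unfold insF
  by_cases c1 : i - 1 < (m : ℕ)
  · rw [dif_pos c1, if_pos (by omega : i ≤ (m : ℕ))]
    rw [dif_pos (by have := m.isLt; omega : i - 1 < n)]
    simp
  · rw [dif_neg c1]
    by_cases c2 : i - 1 = (m : ℕ)
    · rw [dif_pos c2, if_neg (by omega), if_pos (by omega)]
      simp
    · rw [dif_neg c2, if_neg (by omega), if_neg (by omega)]
      have hd : i - 1 - 1 < n := by have := m.isLt; omega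
      rw [dif_pos hd]
      simp

lemma mem_peakSet_iff {σ : Equiv.Perm (Fin n)} {i : ℕ} :
    i ∈ peakSet n σ ↔ 2 ≤ i ∧ i + 1 ≤ n ∧
      pval n σ (i - 1) < pval n σ i ∧ pval n σ (i + 1) < pval n σ i := by
  unfold peakSet
  simp only [Finset.mem_filter, Finset.mem_range]
  constructor
  · rintro ⟨_, h⟩; exact h
  · rintro ⟨h1, h2, h3⟩; exact ⟨by omega, h1, h2, h3⟩

lemma peak_bounds {σ : Equiv.Perm (Fin n)} {i : ℕ} (h : i ∈ peakSet n σ) :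
    2 ≤ i ∧ i + 1 ≤ n := ⟨(mem_peakSet_iff.mp h).1, (mem_peakSet_iff.mp h).2.1⟩

lemma peak_not_adjacent {σ : Equiv.Perm (Fin n)} {i : ℕ} (h : i ∈ peakSet n σ) :
    i + 1 ∉ peakSet n σ := by
  intro h2
  rw [mem_peakSet_iff] at h h2
  have := h.2.2.2
  have h3 := h2.2.2.1
  simp only [Nat.add_sub_cancel] at h3
  omega

lemma peakSet_ins (m : Fin (n+1)) (σ : Equiv.Perm (Fin n)) :
    peakSet (n+1) (ins m σ) =
      ((peakSet n σ).filter fun j => j + 1 ≤ (m : ℕ)) ∪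
      (if 1 ≤ (m : ℕ) ∧ (m : ℕ) + 1 ≤ n then {(m : ℕ) + 1} else ∅) ∪
      ((peakSet n σ).filter fun j => (m : ℕ) + 2 ≤ j).image (· + 1) := by
  have hm := m.isLt
  ext i
  simp only [Finset.mem_union, Finset.mem_filter, Finset.mem_image]
  by_cases hr : 2 ≤ i ∧ i ≤ n
  · obtain ⟨hr1, hr2⟩ := hr
    rw [mem_peakSet_iff]
    have e1 := pval_ins m σ (i - 1) (by omega) (by omega)
    have e2 := pval_ins m σ i (by omega) (by omega)
    have e3 := pval_ins m σ (i + 1) (by omega) (by omega)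
    have b1 := pval_le σ (i - 1)
    have b2 := pval_le σ i
    have b3 := pval_le σ (i + 1)
    have b4 := pval_le σ (i - 2)
    -- case split on relation of i to m
    rcases (by omega : i + 1 ≤ (m:ℕ) ∨ i = (m:ℕ) ∨ i = (m:ℕ) + 1 ∨ i = (m:ℕ) + 2 ∨ (m:ℕ) + 3 ≤ i)
      with hc | hc | hc | hc | hc
    · -- all indices below m : peak iff i ∈ peakSet σ
      rw [if_pos (by omega)] at e1 e2 e3
      rw [e1, e2, e3]
      constructor
      · rintro ⟨_, _, hlt1, hlt2⟩
        exact Or.inl (Or.inl ⟨mem_peakSet_iff.mpr ⟨hr1, by omega, hlt1, hlt2⟩, by omega⟩)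
      · rintro ((⟨hp, _⟩ | hp) | ⟨j, ⟨hp, hj⟩, hji⟩)
        · have := mem_peakSet_iff.mp hp
          exact ⟨hr1, by omega, this.2.2.1, this.2.2.2⟩
        · exfalso
          rcases (em (1 ≤ (m:ℕ) ∧ (m:ℕ) + 1 ≤ n)) with hh | hh
          · rw [if_pos hh] at hp; simp at hp; omega
          · rw [if_neg hh] at hp; simp at hp
        · exfalso; have := (peak_bounds hp).1; omega
    · -- i = m : pval (i+1) = n+1, not a peak
      rw [if_neg (by omega), if_pos (by omega)] at e3
      rw [if_pos (by omega)] at e2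
      constructor
      · rintro ⟨_, _, _, hlt2⟩; omega
      · rintro ((⟨hp, hj⟩ | hp) | ⟨j, ⟨hp, hj⟩, hji⟩)
        · omega
        · exfalso
          rcases (em (1 ≤ (m:ℕ) ∧ (m:ℕ) + 1 ≤ n)) with hh | hh
          · rw [if_pos hh] at hp; simp at hp; omega
          · rw [if_neg hh] at hp; simp at hp
        · exfalso; have := (peak_bounds hp).1; omega
    · -- i = m + 1 : always a peak (within range)
      rw [if_pos (by omega)] at e1
      rw [if_neg (by omega), if_pos (by omega)] at e2
      rw [if_neg (by omega), if_neg (by omega)] at e3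
      have : i + 1 - 1 = i := by omega
      rw [this] at e3
      constructor
      · intro _
        refine Or.inl (Or.inr ?_)
        rw [if_pos (by constructor <;> omega)]
        simp; omega
      · intro _
        exact ⟨hr1, by omega, by omega, by omega⟩
    · -- i = m + 2 : pval (i-1) = n+1, not a peak
      rw [if_neg (by omega), if_pos (by omega)] at e1
      rw [if_neg (by omega), if_neg (by omega)] at e2
      constructor
      · rintro ⟨_, _, hlt1, _⟩; omega
      · rintro ((⟨hp, hj⟩ | hp) | ⟨j, ⟨hp, hj⟩, hji⟩)
        · have := (peak_bounds hp).1; omega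
        · exfalso
          rcases (em (1 ≤ (m:ℕ) ∧ (m:ℕ) + 1 ≤ n)) with hh | hh
          · rw [if_pos hh] at hp; simp at hp; omega
          · rw [if_neg hh] at hp; simp at hp
        · exfalso; omega
    · -- i ≥ m + 3 : peak iff i - 1 ∈ peakSet σ
      rw [if_neg (by omega), if_neg (by omega)] at e1 e2 e3
      have h1 : i + 1 - 1 = i := by omega
      rw [h1] at e3
      have h2 : i - 1 - 1 = i - 2 := by omega
      rw [h2] at e1
      constructor
      · rintro ⟨_, _, hlt1, hlt2⟩
        refine Or.inr ⟨i - 1, ⟨mem_peakSet_iff.mpr ⟨by omega, by omega, ?_, ?_⟩, by omega⟩, by omega⟩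
        · have : i - 1 - 1 = i - 2 := by omega
          rw [this]; omega
        · have : i - 1 + 1 = i := by omega
          rw [this]; omega
      · rintro ((⟨hp, hj⟩ | hp) | ⟨j, ⟨hp, hj⟩, hji⟩)
        · have := (peak_bounds hp).1
          have := (peak_bounds hp).2
          omega
        · exfalso
          rcases (em (1 ≤ (m:ℕ) ∧ (m:ℕ) + 1 ≤ n)) with hh | hh
          · rw [if_pos hh] at hp; simp at hp; omega
          · rw [if_neg hh] at hp; simp at hp
        · have hji' : j = i - 1 := by omega
          subst hji'
          have hq := mem_peakSet_iff.mp hp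
          have h3 : i - 1 - 1 = i - 2 := by omega
          have h4 : i - 1 + 1 = i := by omega
          rw [h3, h4] at hq
          exact ⟨hr1, by omega, by omega, by omega⟩
  · -- out of range: both sides false
    rw [mem_peakSet_iff]
    constructor
    · rintro ⟨h1, h2, -⟩; exact absurd ⟨h1, by omega⟩ hr
    · rintro ((⟨hp, hj⟩ | hp) | ⟨j, ⟨hp, hj⟩, hji⟩)
      · have := peak_bounds hp; exact absurd ⟨this.1, by omega⟩ hr
      · rcases (em (1 ≤ (m:ℕ) ∧ (m:ℕ) + 1 ≤ n)) with hh | hh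
        · rw [if_pos hh] at hp; simp at hp; exact absurd ⟨by omega, by omega⟩ hr
        · rw [if_neg hh] at hp; simp at hp
      · have := peak_bounds hp; exact absurd ⟨by omega, by omega⟩ hr

lemma card_peakSet_ins (m : Fin (n+1)) (σ : Equiv.Perm (Fin n)) :
    (peakSet (n+1) (ins m σ)).card =
      ((peakSet n σ).filter fun j => j + 1 ≤ (m : ℕ)).card +
      (if 1 ≤ (m : ℕ) ∧ (m : ℕ) + 1 ≤ n then 1 else 0) +
      ((peakSet n σ).filter fun j => (m : ℕ) + 2 ≤ j).card := by
  have hd1 : Disjoint ((peakSet n σ).filter fun j => j + 1 ≤ (m : ℕ))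
      (if 1 ≤ (m : ℕ) ∧ (m : ℕ) + 1 ≤ n then ({(m : ℕ) + 1} : Finset ℕ) else ∅) := by
    rw [Finset.disjoint_left]
    rintro a ha hb
    obtain ⟨ha1, ha2⟩ := Finset.mem_filter.mp ha
    split_ifs at hb with hc
    · simp only [Finset.mem_singleton] at hb; omega
    · simp at hb
  have hd2 : Disjoint (((peakSet n σ).filter fun j => j + 1 ≤ (m : ℕ)) ∪
      (if 1 ≤ (m : ℕ) ∧ (m : ℕ) + 1 ≤ n then ({(m : ℕ) + 1} : Finset ℕ) else ∅))
      (((peakSet n σ).filter fun j => (m : ℕ) + 2 ≤ j).image (· + 1)) := by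
    rw [Finset.disjoint_left]
    rintro a ha hb
    simp only [Finset.mem_image, Finset.mem_filter] at hb
    obtain ⟨j, ⟨hj, hj2⟩, hj3⟩ := hb
    rcases Finset.mem_union.mp ha with ha | ha
    · obtain ⟨_, ha2⟩ := Finset.mem_filter.mp ha
      omega
    · split_ifs at ha with hc
      · simp only [Finset.mem_singleton] at ha; omega
      · simp at ha
  rw [peakSet_ins, Finset.card_union_of_disjoint hd2, Finset.card_union_of_disjoint hd1,
    Finset.card_image_of_injective _ (add_left_injective 1)]
  congr 1
  congr 1
  split_ifs <;> simp

lemma ins_val_self (m : Fin (n+1)) (σ : Equiv.Perm (Fin n)) :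
    ((ins m σ m : Fin (n+1)) : ℕ) = n := by
  rw [ins_apply]; unfold insF
  rw [dif_neg (lt_irrefl _), dif_pos rfl]
  rfl

lemma ins_val_ne (m : Fin (n+1)) (σ : Equiv.Perm (Fin n)) (j : Fin (n+1)) (hj : j ≠ m) :
    ((ins m σ j : Fin (n+1)) : ℕ) ≠ n := by
  rw [ins_apply]; unfold insF
  have hj' : (j : ℕ) ≠ (m : ℕ) := fun hh => hj (Fin.ext hh)
  split_ifs with h1 h2
  · have := (σ ⟨j, by omega⟩).isLt; simp only [Fin.coe_castSucc]; omega
  · have := (σ ⟨(j:ℕ) - 1, by have := j.isLt; have := m.isLt; omega⟩).isLt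
    simp only [Fin.coe_castSucc]; omega

lemma ins_bijective :
    Function.Bijective (fun x : Fin (n+1) × Equiv.Perm (Fin n) => ins x.1 x.2) := by
  rw [Fintype.bijective_iff_injective_and_card]
  constructor
  · rintro ⟨m, σ⟩ ⟨m', σ'⟩ h
    simp only at h
    have hmm : m = m' := by
      by_contra hne
      have h1 : ((ins m σ m : Fin (n+1)) : ℕ) = n := ins_val_self m σ
      rw [h] at h1
      exact ins_val_ne m' σ' m hne h1
    subst hmm
    have key : ∀ j, insF m σ j = insF m σ' j := by
      intro j; rw [← ins_apply, ← ins_apply, h]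
    have hσ : σ = σ' := by
      ext u
      have hu := u.isLt
      by_cases hc : (u : ℕ) < (m : ℕ)
      · have e1 := key u.castSucc
        unfold insF at e1
        have hcc : ((u.castSucc : Fin (n+1)) : ℕ) < (m : ℕ) := by
          simp only [Fin.coe_castSucc]; omega
        rw [dif_pos hcc] at e1
        rw [dif_pos hcc] at e1
        have h2 := congrArg Fin.val e1
        simp only [Fin.coe_castSucc, Fin.eta] at h2
        exact h2
      · have e1 := key u.succ
        unfold insF at e1
        have hc1 : ¬ ((u.succ : Fin (n+1)) : ℕ) < (m : ℕ) := by
          simp only [Fin.val_succ]; omega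
        have hc2 : ¬ ((u.succ : Fin (n+1)) : ℕ) = (m : ℕ) := by
          simp only [Fin.val_succ]; omega
        rw [dif_neg hc1] at e1
        rw [dif_neg hc2] at e1
        rw [dif_neg hc1] at e1
        rw [dif_neg hc2] at e1
        have h2 := congrArg Fin.val e1
        simp only [Fin.val_succ, Fin.coe_castSucc, Nat.add_sub_cancel, Fin.eta] at h2
        exact h2
    rw [hσ]
  · simp [Fintype.card_perm, Nat.factorial_succ]

open Finset in
lemma card_filter_via_ins (Pr : Equiv.Perm (Fin (n+1)) → Prop) [DecidablePred Pr] :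
    (Finset.univ.filter Pr).card =
      ∑ σ : Equiv.Perm (Fin n),
        (Finset.univ.filter fun m : Fin (n+1) => Pr (ins m σ)).card := by
  have hbij := (ins_bijective (n := n))
  have step1 : (Finset.univ.filter fun x : Fin (n+1) × Equiv.Perm (Fin n) =>
      Pr (ins x.1 x.2)).card = (Finset.univ.filter Pr).card := by
    refine Finset.card_bij (fun x _ => ins x.1 x.2) ?_ ?_ ?_
    · intro x hx
      simp only [Finset.mem_filter, Finset.mem_univ, true_and] at hx ⊢
      exact hx
    · intro a _ b _ hab
      exact hbij.1 hab
    · intro b hb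
      obtain ⟨a, ha⟩ := hbij.2 b
      refine ⟨a, ?_, ha⟩
      simp only [Finset.mem_filter, Finset.mem_univ, true_and] at hb ⊢
      rw [show ins a.1 a.2 = b from ha]
      exact hb
  rw [← step1, Finset.card_filter, Fintype.sum_prod_type_right]
  refine Finset.sum_congr rfl fun σ _ => ?_
  rw [Finset.card_filter]

/-- The fiber-count function: number of peaks of `ins m σ` in terms of `M = ↑m`. -/
def g (P : Finset ℕ) (nn M : ℕ) : ℕ :=
  (P.filter fun j => j + 1 ≤ M).card +
  (if 1 ≤ M ∧ M + 1 ≤ nn then 1 else 0) +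
  (P.filter fun j => M + 2 ≤ j).card

lemma count_m (σ : Equiv.Perm (Fin n)) (k : ℕ) :
    (Finset.univ.filter fun m : Fin (n+1) =>
        (peakSet (n+1) (ins m σ)).card = k).card =
      ((Finset.range (n+1)).filter fun M => g (peakSet n σ) n M = k).card := by
  have h1 : (Finset.univ.filter fun m : Fin (n+1) =>
      (peakSet (n+1) (ins m σ)).card = k) =
      (Finset.univ.filter fun m : Fin (n+1) => g (peakSet n σ) n (m : ℕ) = k) := by
    apply Finset.filter_congr
    intro m _
    rw [card_peakSet_ins]
    rfl
  rw [h1, Finset.card_filter, Finset.card_filter,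
    Fin.sum_univ_eq_sum_range (fun i => if g (peakSet n σ) n i = k then 1 else 0)]

-- case P empty
lemma count_g_empty_one (hn : 1 ≤ n) :
    ((Finset.range (n+1)).filter fun M => g (∅ : Finset ℕ) n M = 1).card = n - 1 := by
  have : ((Finset.range (n+1)).filter fun M => g (∅ : Finset ℕ) n M = 1) =
      Finset.Ico 1 n := by
    ext M
    simp only [Finset.mem_filter, Finset.mem_range, Finset.mem_Ico, g,
      Finset.filter_empty, Finset.card_empty]
    split_ifs with hc
    · constructor
      · rintro ⟨_, _⟩; omega
      · rintro ⟨_, _⟩; omega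
    · constructor
      · rintro ⟨_, h⟩; omega
      · rintro ⟨_, _⟩; omega
  rw [this, Nat.card_Ico]

lemma count_g_empty_zero (hn : 1 ≤ n) :
    ((Finset.range (n+1)).filter fun M => g (∅ : Finset ℕ) n M = 0).card = 2 := by
  have : ((Finset.range (n+1)).filter fun M => g (∅ : Finset ℕ) n M = 0) =
      {0, n} := by
    ext M
    simp only [Finset.mem_filter, Finset.mem_range, Finset.mem_insert,
      Finset.mem_singleton, g, Finset.filter_empty, Finset.card_empty]
    split_ifs with hc
    · constructor
      · rintro ⟨_, h⟩; exact h.elim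
      · rintro (h | h)
        · exact absurd hc.1 (by omega)
        · exact absurd hc.2 (by omega)
    · constructor
      · rintro ⟨h, _⟩; omega
      · rintro (h | h) <;> omega
  rw [this]
  rw [Finset.card_insert_of_notMem (by simp; omega), Finset.card_singleton]

lemma g_singleton (q M : ℕ) :
    g ({q} : Finset ℕ) n M =
      (if q + 1 ≤ M then 1 else 0) +
      (if 1 ≤ M ∧ M + 1 ≤ n then 1 else 0) +
      (if M + 2 ≤ q then 1 else 0) := by
  unfold g
  rw [Finset.filter_singleton, Finset.filter_singleton]
  congr 2
  · split_ifs <;> simp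
  · split_ifs <;> simp

lemma count_g_singleton_one {q : ℕ} (hq2 : 2 ≤ q) (hqn : q + 1 ≤ n) :
    ((Finset.range (n+1)).filter fun M => g ({q} : Finset ℕ) n M = 1).card = 4 := by
  have hset : ((Finset.range (n+1)).filter fun M => g ({q} : Finset ℕ) n M = 1) =
      {0, q - 1, q, n} := by
    ext M
    simp only [Finset.mem_filter, Finset.mem_range, Finset.mem_insert, Finset.mem_singleton]
    rw [g_singleton]
    constructor
    · rintro ⟨hM, hg⟩
      split_ifs at hg <;> first | exact hg.elim | omega
    · intro hM
      rcases hM with h | h | h | h <;>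
        (refine ⟨by omega, ?_⟩; split_ifs <;> omega)
  rw [hset]
  rw [Finset.card_insert_of_notMem (by simp; omega),
      Finset.card_insert_of_notMem (by simp; omega),
      Finset.card_insert_of_notMem (by simp; omega),
      Finset.card_singleton]

lemma count_g_singleton_zero {q : ℕ} (hq2 : 2 ≤ q) (hqn : q + 1 ≤ n) :
    ((Finset.range (n+1)).filter fun M => g ({q} : Finset ℕ) n M = 0).card = 0 := by
  rw [Finset.card_eq_zero, Finset.filter_eq_empty_iff]
  intro M hM
  rw [Finset.mem_range] at hM
  rw [g_singleton]
  intro hg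
  split_ifs at hg <;> first | exact hg.elim | omega

lemma count_g_big (P : Finset ℕ) (hcard : 2 ≤ P.card)
    (hb : ∀ j ∈ P, 2 ≤ j ∧ j + 1 ≤ n) (hna : ∀ j ∈ P, j + 1 ∉ P)
    (k : ℕ) (hk : k ≤ 1) :
    ((Finset.range (n+1)).filter fun M => g P n M = k).card = 0 := by
  rw [Finset.card_eq_zero, Finset.filter_eq_empty_iff]
  intro M hM hg
  rw [Finset.mem_range] at hM
  obtain ⟨a, ha, b, hb', hab⟩ := Finset.one_lt_card.mp hcard
  have hba := hb a ha
  have hbb := hb b hb'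
  have hga : g P n M ≤ 1 := by omega
  unfold g at hga
  -- helper facts
  have mem1 : ∀ j ∈ P, j + 1 ≤ M → 1 ≤ (P.filter fun j => j + 1 ≤ M).card := by
    intro j hj hjM
    exact Finset.card_pos.mpr ⟨j, Finset.mem_filter.mpr ⟨hj, hjM⟩⟩
  have mem3 : ∀ j ∈ P, M + 2 ≤ j → 1 ≤ (P.filter fun j => M + 2 ≤ j).card := by
    intro j hj hjM
    exact Finset.card_pos.mpr ⟨j, Finset.mem_filter.mpr ⟨hj, hjM⟩⟩
  by_cases ca1 : a + 1 ≤ M <;> by_cases ca3 : M + 2 ≤ a <;>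
    by_cases cb1 : b + 1 ≤ M <;> by_cases cb3 : M + 2 ≤ b
  all_goals try omega  -- kill impossible combinations ca1∧ca3 etc.
  -- both in filter1
  · have : 2 ≤ (P.filter fun j => j + 1 ≤ M).card :=
      Finset.one_lt_card.mpr ⟨a, Finset.mem_filter.mpr ⟨ha, ca1⟩,
        b, Finset.mem_filter.mpr ⟨hb', cb1⟩, hab⟩
    omega
  · -- a in filter1, b in filter3
    have h1 := mem1 a ha ca1
    have h3 := mem3 b hb' cb3
    omega
  · -- a in filter1, b in region2
    have h1 := mem1 a ha ca1
    have hind : (if 1 ≤ M ∧ M + 1 ≤ n then 1 else 0) = 1 := by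
      rw [if_pos]; constructor <;> omega
    omega
  · -- a in filter3, b in filter1
    have h1 := mem1 b hb' cb1
    have h3 := mem3 a ha ca3
    omega
  · -- both filter3
    have : 2 ≤ (P.filter fun j => M + 2 ≤ j).card :=
      Finset.one_lt_card.mpr ⟨a, Finset.mem_filter.mpr ⟨ha, ca3⟩,
        b, Finset.mem_filter.mpr ⟨hb', cb3⟩, hab⟩
    omega
  · -- a filter3, b region2
    have h3 := mem3 a ha ca3
    have hind : (if 1 ≤ M ∧ M + 1 ≤ n then 1 else 0) = 1 := by
      rw [if_pos]; constructor <;> omega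
    omega
  · -- a region2, b filter1
    have h1 := mem1 b hb' cb1
    have hind : (if 1 ≤ M ∧ M + 1 ≤ n then 1 else 0) = 1 := by
      rw [if_pos]; constructor <;> omega
    omega
  · -- a region2, b filter3
    have h3 := mem3 b hb' cb3
    have hind : (if 1 ≤ M ∧ M + 1 ≤ n then 1 else 0) = 1 := by
      rw [if_pos]; constructor <;> omega
    omega
  · -- both region2 : adjacent peaks, contradiction
    exfalso
    have haM : a = M ∨ a = M + 1 := by omega
    have hbM : b = M ∨ b = M + 1 := by omega
    rcases haM with h | h <;> rcases hbM with h' | h'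
    · exact hab (by omega)
    · exact hna a ha (by rw [show a + 1 = b by omega]; exact hb')
    · exact hna b hb' (by rw [show b + 1 = a by omega]; exact ha)
    · exact hab (by omega)

/-- number of permutations of `[nn]` with exactly `k` peaks -/
def cnt (k nn : ℕ) : ℕ :=
  (Finset.univ.filter fun π : Equiv.Perm (Fin nn) => (peakSet nn π).card = k).card

lemma fiber_count (σ : Equiv.Perm (Fin n)) (k : ℕ) (hk : k ≤ 1) (hn : 1 ≤ n) :
    ((Finset.range (n+1)).filter fun M => g (peakSet n σ) n M = k).card =
      if (peakSet n σ).card = 0 then (if k = 0 then 2 else n - 1)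
      else if (peakSet n σ).card = 1 then (if k = 0 then 0 else 4)
      else 0 := by
  rcases Nat.lt_or_ge (peakSet n σ).card 2 with hlt | hge
  · interval_cases hc : (peakSet n σ).card
    · rw [if_pos rfl]
      have hP : peakSet n σ = ∅ := Finset.card_eq_zero.mp hc
      rw [hP]
      interval_cases k
      · rw [if_pos rfl]; exact count_g_empty_zero hn
      · rw [if_neg one_ne_zero]; exact count_g_empty_one hn
    · rw [if_neg (by omega), if_pos rfl]
      obtain ⟨q, hq⟩ := Finset.card_eq_one.mp hc
      have hqm : q ∈ peakSet n σ := by rw [hq]; exact Finset.mem_singleton_self q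
      have hqb := peak_bounds hqm
      rw [hq]
      interval_cases k
      · rw [if_pos rfl]; exact count_g_singleton_zero hqb.1 hqb.2
      · rw [if_neg one_ne_zero]; exact count_g_singleton_one hqb.1 hqb.2
  · rw [if_neg (by omega), if_neg (by omega)]
    exact count_g_big _ hge (fun j hj => peak_bounds hj) (fun j hj => peak_not_adjacent hj) k hk

lemma cnt_zero_succ (hn : 1 ≤ n) : cnt 0 (n+1) = 2 * cnt 0 n := by
  unfold cnt
  rw [card_filter_via_ins (fun π : Equiv.Perm (Fin (n+1)) => (peakSet (n+1) π).card = 0)]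
  calc ∑ σ : Equiv.Perm (Fin n),
        (Finset.univ.filter fun m : Fin (n+1) => (peakSet (n+1) (ins m σ)).card = 0).card
      = ∑ σ : Equiv.Perm (Fin n),
          (if (peakSet n σ).card = 0 then 2 else 0) := by
        refine Finset.sum_congr rfl fun σ _ => ?_
        rw [count_m σ 0, fiber_count σ 0 (by omega) hn]
        split_ifs <;> first | exact (‹False›).elim | omega
    _ = 2 * cnt 0 n := by
        rw [← Finset.sum_filter, Finset.sum_const, smul_eq_mul]
        unfold cnt
        ring

lemma cnt_one_succ (hn : 1 ≤ n) :
    cnt 1 (n+1) = 4 * cnt 1 n + (n - 1) * cnt 0 n := by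
  unfold cnt
  rw [card_filter_via_ins (fun π : Equiv.Perm (Fin (n+1)) => (peakSet (n+1) π).card = 1)]
  calc ∑ σ : Equiv.Perm (Fin n),
        (Finset.univ.filter fun m : Fin (n+1) => (peakSet (n+1) (ins m σ)).card = 1).card
      = ∑ σ : Equiv.Perm (Fin n),
          ((if (peakSet n σ).card = 1 then 4 else 0) +
           (if (peakSet n σ).card = 0 then n - 1 else 0)) := by
        refine Finset.sum_congr rfl fun σ _ => ?_
        rw [count_m σ 1, fiber_count σ 1 le_rfl hn]
        split_ifs <;> first | exact (‹False›).elim | omega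
    _ = 4 * cnt 1 n + (n - 1) * cnt 0 n := by
        rw [Finset.sum_add_distrib, ← Finset.sum_filter, ← Finset.sum_filter,
            Finset.sum_const, Finset.sum_const, smul_eq_mul, smul_eq_mul]
        unfold cnt
        ring

lemma peakSet_small (hn : n ≤ 2) (π : Equiv.Perm (Fin n)) : peakSet n π = ∅ := by
  rw [Finset.eq_empty_iff_forall_notMem]
  intro i hi
  have := peak_bounds hi
  omega

lemma cnt_zero_one : cnt 0 1 = 1 := by
  unfold cnt
  rw [Finset.filter_true_of_mem fun π _ => by
    rw [peakSet_small (by omega) π]; simp]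
  simp [Fintype.card_perm]

lemma cnt_one_two : cnt 1 2 = 0 := by
  unfold cnt
  rw [Finset.card_eq_zero, Finset.filter_eq_empty_iff]
  intro π _
  rw [peakSet_small (by omega) π]
  simp

lemma cnt_zero_pow : ∀ m : ℕ, cnt 0 (m + 1) = 2 ^ m := by
  intro m
  induction m with
  | zero => exact cnt_zero_one
  | succ k ih =>
    rw [cnt_zero_succ (by omega), ih, ← pow_succ']

lemma cnt_one_formula : ∀ k : ℕ, (cnt 1 (k + 2) : ℤ) = 2 ^ (2 * k + 1) - (k + 2) * 2 ^ k := by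
  intro k
  induction k with
  | zero => rw [cnt_one_two]; norm_num
  | succ k ih =>
    have h1 : k + 1 + 2 = (k + 2) + 1 := by omega
    rw [h1, cnt_one_succ (by omega), cnt_zero_pow (k + 1)]
    have h2 : k + 2 - 1 = k + 1 := by omega
    rw [h2]
    push_cast
    rw [ih]
    ring

end S19

/-- For `n ≥ 2`, the number of permutations of `[n]` with exactly one peak is
`2^(2n-3) - n 2^(n-2)`. -/
theorem stmt_19 (n : ℕ) (hn : 2 ≤ n) :
    ((Finset.univ.filter fun π : Equiv.Perm (Fin n) => (peakSet n π).card = 1).card : ℤ) =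
      2 ^ (2 * n - 3) - (n : ℤ) * 2 ^ (n - 2) := by
  obtain ⟨k, rfl⟩ : ∃ k, n = k + 2 := ⟨n - 2, by omega⟩
  have h1 : 2 * (k + 2) - 3 = 2 * k + 1 := by omega
  have h2 : k + 2 - 2 = k := by omega
  rw [h1, h2]
  have := S19.cnt_one_formula k
  unfold S19.cnt at this
  rw [this]
  push_cast
  ring
end
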